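/- arXiv:1702.03058 — 8 statements merged into one kernel-verified Lean document; each statement's English description precedes it below -/
import Mathlib

section
/- Let D be a local integral domain with maximal ideal m. If dim D ≥ 1, then D has a principal maximal ideal if and only if there is a surjective ring homomorphism α from a local domain A onto a field C and a discrete valuation ring B with fraction field C such that D is isomorphic to the pullback α⁻¹(B). -/
open IsLocalRing

/-- The prime ideal `⋂ₙ xⁿD`. -/
def interPow (D : Type) [CommRing D] (x : D) : Ideal D where
  carrier := {d | ∀ n : ℕ, x ^ n ∣ d}
  zero_mem' := fun n => dvd_zero _
  add_mem' := fun ha hb n => dvd_add (ha n) (hb n)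
  smul_mem' := fun c d hd n => (hd n).mul_left c

lemma interPow_mem {D : Type} [CommRing D] {x d : D} :
    d ∈ interPow D x ↔ ∀ n : ℕ, x ^ n ∣ d := Iff.rfl

variable {D : Type} [CommRing D] [IsDomain D] [IsLocalRing D] {x : D}

lemma factor_of_not_mem (hx : maximalIdeal D = Ideal.span {x})
    {d : D} (hd : d ∉ interPow D x) : ∃ (k : ℕ) (u : Dˣ), d = x ^ k * u := by
  classical
  rw [interPow_mem] at hd
  push_neg at hd
  have hex : ∃ n, ¬ x ^ n ∣ d := hd
  set n₀ := Nat.find hex with hn₀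
  have hn0 : n₀ ≠ 0 := by
    intro h
    have := Nat.find_spec hex
    rw [← hn₀, h] at this
    exact this (by simp)
  obtain ⟨k, hk⟩ := Nat.exists_eq_succ_of_ne_zero hn0
  have hdvd : x ^ k ∣ d := by
    by_contra h
    have := Nat.find_min' hex h
    omega
  have hndvd : ¬ x ^ (k + 1) ∣ d := by
    have := Nat.find_spec hex
    rwa [← hn₀, hk] at this
  obtain ⟨c, hc⟩ := hdvd
  have hcu : IsUnit c := by
    by_contra h
    have hcm : c ∈ maximalIdeal D := by rwa [mem_maximalIdeal, mem_nonunits_iff]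
    rw [hx, Ideal.mem_span_singleton] at hcm
    obtain ⟨e, he⟩ := hcm
    exact hndvd ⟨e, by rw [hc, he, pow_succ]; ring⟩
  obtain ⟨u, hu⟩ := hcu
  exact ⟨k, u, by rw [hc, hu]⟩

lemma x_not_unit (hx : maximalIdeal D = Ideal.span {x}) : ¬ IsUnit x := by
  have : x ∈ maximalIdeal D := by rw [hx]; exact Ideal.mem_span_singleton_self x
  rwa [mem_maximalIdeal, mem_nonunits_iff] at this

lemma x_not_mem (hx : maximalIdeal D = Ideal.span {x}) (hx0 : x ≠ 0) :
    x ∉ interPow D x := by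
  intro h
  obtain ⟨t, ht⟩ := h 2
  have : (1 : D) = x * t := by
    apply mul_left_cancel₀ hx0
    rw [mul_one, ← mul_assoc, ← sq]; exact ht
  exact x_not_unit hx (IsUnit.of_mul_eq_one t this.symm)

lemma interPow_isPrime (hx : maximalIdeal D = Ideal.span {x}) (hx0 : x ≠ 0) :
    (interPow D x).IsPrime := by
  constructor
  · intro h
    have h1 : (1 : D) ∈ interPow D x := h ▸ Submodule.mem_top
    obtain ⟨t, ht⟩ := h1 1
    rw [pow_one] at ht
    exact x_not_unit hx (IsUnit.of_mul_eq_one t ht.symm)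
  · intro a b hab
    by_contra h
    push_neg at h
    obtain ⟨ha, hb⟩ := h
    obtain ⟨k, u, hu⟩ := factor_of_not_mem hx ha
    obtain ⟨l, v, hv⟩ := factor_of_not_mem hx hb
    obtain ⟨t, ht⟩ := hab (k + l + 1)
    have hne : (x : D) ^ (k + l) ≠ 0 := pow_ne_zero _ hx0
    have : (u : D) * v = x * t := by
      apply mul_left_cancel₀ hne
      rw [← mul_assoc]
      calc x ^ (k + l) * (u : D) * v = (x ^ k * u) * (x ^ l * v) := by ring
        _ = a * b := by rw [← hu, ← hv]
        _ = x ^ (k + l + 1) * t := ht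
        _ = x ^ (k + l) * (x * t) := by ring
    exact x_not_unit hx (isUnit_of_dvd_unit ⟨t, this⟩ (u.isUnit.mul v.isUnit))

lemma interPow_le (hx : maximalIdeal D = Ideal.span {x}) :
    interPow D x ≤ maximalIdeal D := fun d hd => by
  rw [hx, Ideal.mem_span_singleton]
  simpa using hd 1

lemma interPow_pow_factor {d : D} (hd : d ∈ interPow D x) (k : ℕ) :
    ∃ q : D, d = x ^ k * q := by
  obtain ⟨q, hq⟩ := hd k
  exact ⟨q, hq⟩

lemma forward_main (hx : maximalIdeal D = Ideal.span {x}) (hx0 : x ≠ 0) :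
    ∃ (A C : Type) (_ : CommRing A) (_ : IsDomain A) (_ : IsLocalRing A)
        (_ : Field C) (α : A →+* C) (B : Subring C) (_ : IsDomain B)
        (_ : IsDiscreteValuationRing B),
      Function.Surjective α ∧ IsFractionRing B C ∧
        Nonempty (D ≃+* (B.comap α)) := by
  haveI hP : (interPow D x).IsPrime := interPow_isPrime hx hx0
  set P := interPow D x with hPdef
  have hle : P.primeCompl ≤ nonZeroDivisors D := fun s hs =>
    mem_nonZeroDivisors_of_ne_zero (fun h => hs (by rw [h]; exact P.zero_mem))
  letI A := Localization.AtPrime P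
  haveI : IsDomain A := IsLocalization.isDomain_localization hle
  letI C := ResidueField A
  letI α : A →+* C := residue A
  have hαsurj : Function.Surjective α := residue_surjective
  letI φ : D →+* C := α.comp (algebraMap D A)
  have hker : ∀ d : D, φ d = 0 ↔ d ∈ P := by
    intro d
    show residue A (algebraMap D A d) = 0 ↔ d ∈ P
    rw [IsLocalRing.residue_eq_zero_iff]
    exact IsLocalization.AtPrime.to_map_mem_maximal_iff A P d
  letI B : Subring C := φ.range
  letI φB : D →+* B := φ.rangeRestrict
  have hφB : ∀ d : D, (φB d : C) = φ d := fun d => rfl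
  have hφB0 : ∀ d : D, φB d = 0 ↔ d ∈ P := by
    intro d
    rw [← hker d]
    exact ⟨fun h => by rw [← hφB, h]; rfl, fun h => Subtype.ext (by rw [hφB, h]; rfl)⟩
  have hφBu : ∀ u : Dˣ, IsUnit (φB u) := fun u => (u.isUnit).map φB
  -- the irreducible element
  set π : B := φB x with hπ
  have hπ0 : π ≠ 0 := fun h => x_not_mem hx hx0 ((hφB0 x).mp h)
  have hπnu : ¬ IsUnit π := by
    rintro ⟨w, hw⟩
    obtain ⟨d', hd'⟩ : ∃ d', φB d' = (w⁻¹ : Bˣ).1 := φ.rangeRestrict_surjective _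
    have h1 : φB (x * d') = 1 := by
      rw [map_mul, ← hπ, hd', ← hw]
      exact_mod_cast w.mul_inv
    have h2 : x * d' - 1 ∈ P := by
      rw [← hφB0]
      rw [map_sub, h1, map_one, sub_self]
    have h3 : (1 : D) ∈ maximalIdeal D := by
      have hxd : x * d' ∈ maximalIdeal D := by
        rw [hx, Ideal.mem_span_singleton]
        exact ⟨d', rfl⟩
      have := interPow_le hx h2
      simpa using (maximalIdeal D).sub_mem hxd this
    rw [mem_maximalIdeal, mem_nonunits_iff] at h3
    exact h3 isUnit_one
  have hfact : ∀ b : B, b ≠ 0 → ∃ n : ℕ, Associated (π ^ n) b := by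
    intro b hb
    obtain ⟨d, hd⟩ := φ.rangeRestrict_surjective b
    have hdP : d ∉ P := fun h => hb (hd ▸ (hφB0 d).mpr h)
    obtain ⟨k, u, hu⟩ := factor_of_not_mem hx hdP
    refine ⟨k, (hφBu u).unit, ?_⟩
    rw [IsUnit.unit_spec, hπ, ← map_pow, ← map_mul, ← hu, hd]
  have hπirr : Irreducible π := by
    constructor
    · exact hπnu
    · intro a b hab
      by_contra hcon
      push_neg at hcon
      obtain ⟨ha, hb⟩ := hcon
      have ha0 : a ≠ 0 := fun h => hπ0 (by rw [hab, h, zero_mul])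
      have hb0 : b ≠ 0 := fun h => hπ0 (by rw [hab, h, mul_zero])
      obtain ⟨i, wa, hwa⟩ := hfact a ha0
      obtain ⟨j, wb, hwb⟩ := hfact b hb0
      rcases Nat.eq_zero_or_pos i with hi | hi
      · rw [hi, pow_zero, one_mul] at hwa
        exact ha (hwa ▸ wa.isUnit)
      rcases Nat.eq_zero_or_pos j with hj | hj
      · rw [hj, pow_zero, one_mul] at hwb
        exact hb (hwb ▸ wb.isUnit)
      have hij : π = π ^ (i + j) * ((wa : B) * (wb : B)) :=
        calc π = a * b := hab
          _ = (π ^ i * wa) * (π ^ j * wb) := by rw [hwa, hwb]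
          _ = π ^ (i + j) * ((wa : B) * (wb : B)) := by rw [pow_add]; ring
      have h2 : 2 ≤ i + j := by omega
      obtain ⟨m, hm⟩ := Nat.exists_eq_add_of_le h2
      have hcancel : π * 1 = π * (π ^ (1 + m) * ((wa : B) * (wb : B))) := by
        rw [mul_one]
        nth_rewrite 1 [hij]
        rw [hm, pow_add, pow_add]
        ring
      have h3 := mul_left_cancel₀ hπ0 hcancel
      refine hπnu (IsUnit.of_mul_eq_one (a := π) (π ^ m * ((wa : B) * (wb : B))) ?_)
      rw [h3, pow_add, pow_one]
      ring
  haveI hDVR : IsDiscreteValuationRing B :=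
    IsDiscreteValuationRing.ofHasUnitMulPowIrreducibleFactorization
      ⟨π, hπirr, fun {b} hb => hfact b hb⟩
  haveI hFR : IsFractionRing B C :=
    { map_units := fun y => by
        have h0 : (y : B) ≠ 0 := nonZeroDivisors.coe_ne_zero y
        have h1 : ((y : B) : C) ≠ 0 := fun h => h0 (Subtype.ext h)
        exact isUnit_iff_ne_zero.mpr h1
      surj := fun z => by
        obtain ⟨azz, haz⟩ := hαsurj z
        obtain ⟨⟨d, s⟩, hds⟩ := IsLocalization.surj (M := P.primeCompl) azz
        refine ⟨⟨φB d, ⟨φB s.1, ?_⟩⟩, ?_⟩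
        · exact mem_nonZeroDivisors_of_ne_zero (fun h => s.2 ((hφB0 s.1).mp h))
        · show z * (φB s.1 : C) = (φB d : C)
          rw [hφB, hφB, ← haz]
          calc α azz * φ s.1 = α (azz * algebraMap D A s.1) := by rw [map_mul]; rfl
            _ = α (algebraMap D A d) := by rw [hds]
            _ = φ d := rfl
      exists_of_eq := fun {a b} h => ⟨1, by rw [Subtype.ext h]⟩ }
  have hinj : Function.Injective (algebraMap D A) := IsLocalization.injective A hle
  have hrange : ((algebraMap D A).range : Subring A) = B.comap α := by
    apply le_antisymm
    · rintro _ ⟨d, rfl⟩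
      exact ⟨d, rfl⟩
    · rintro a ha
      rw [Subring.mem_comap] at ha
      obtain ⟨e, he⟩ := ha
      obtain ⟨⟨d₀, s⟩, hds⟩ := IsLocalization.surj (M := P.primeCompl) a
      have hsP : s.1 ∉ P := s.2
      obtain ⟨k, u, hu⟩ := factor_of_not_mem hx hsP
      have hαeq : φ (e * s.1 - d₀) = 0 := by
        rw [map_sub, map_mul, he]
        have h2 : α a * φ s.1 = φ d₀ := by
          calc α a * φ s.1 = α (a * algebraMap D A s.1) := by rw [map_mul]; rfl
            _ = φ d₀ := by rw [hds]; rfl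
        rw [h2, sub_self]
      have hmemP : e * s.1 - d₀ ∈ P := (hker _).mp hαeq
      obtain ⟨q, hq⟩ := hmemP k
      have hd₀ : d₀ = x ^ k * (e * u - q) := by
        have h3 : d₀ = e * s.1 - x ^ k * q := by rw [← hq]; ring
        rw [h3, hu]; ring
      have hsu : IsUnit (algebraMap D A s.1) := IsLocalization.map_units A s
      refine ⟨(e * u - q) * ↑u⁻¹, ?_⟩
      have key : algebraMap D A ((e * u - q) * ↑u⁻¹) * algebraMap D A s.1
          = algebraMap D A d₀ := by
        rw [← map_mul, hd₀, hu]
        congr 1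
        have huu : (↑u⁻¹ : D) * u = 1 := u.inv_mul
        calc (e * ↑u - q) * ↑u⁻¹ * (x ^ k * ↑u) = x ^ k * (e * ↑u - q) * (↑u⁻¹ * ↑u) := by
              ring
          _ = x ^ k * (e * ↑u - q) := by rw [huu, mul_one]
      exact hsu.mul_right_cancel (key.trans hds.symm)
  have einj : Function.Injective (algebraMap D A).rangeRestrict := fun a b h =>
    hinj (congrArg Subtype.val h)
  let e1 : D ≃+* ((algebraMap D A).range : Subring A) :=
    RingEquiv.ofBijective (algebraMap D A).rangeRestrict
      ⟨einj, (algebraMap D A).rangeRestrict_surjective⟩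
  exact ⟨A, C, inferInstance, inferInstance, inferInstance, inferInstance, α, B,
    inferInstance, hDVR, hαsurj, hFR, ⟨e1.trans (RingEquiv.subringCongr hrange)⟩⟩

lemma pullback_unit_iff {A C : Type} [CommRing A] [IsLocalRing A]
    [Field C] (α : A →+* C) (B : Subring C)
    (hα : Function.Surjective α) (r : B.comap α) :
    IsUnit r ↔ IsUnit (⟨α r.1, r.2⟩ : B) := by
  constructor
  · rintro ⟨v, hv⟩
    refine IsUnit.of_mul_eq_one ⟨α (v⁻¹).1.1, (v⁻¹).1.2⟩ ?_
    ext
    have : ((v * v⁻¹ : (B.comap α)ˣ) : B.comap α).1 = 1 := by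
      rw [mul_inv_cancel]; rfl
    push_cast at this
    simpa [hv, ← map_mul] using congrArg α this
  · rintro ⟨w, hw⟩
    set b : B := (w⁻¹ : Bˣ).1 with hb
    have hrb : α r.1 * b.1 = 1 := by
      have : ((w * w⁻¹ : Bˣ) : B).1 = 1 := by rw [mul_inv_cancel]; rfl
      push_cast at this
      simpa [hw] using this
    obtain ⟨a, ha⟩ := hα b.1
    have h1 : α (r.1 * a) = 1 := by rw [map_mul, ha]; exact hrb
    have hker : α (1 - r.1 * a) = 0 := by simp [h1]
    have hnu : ¬ IsUnit (1 - r.1 * a) := by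
      intro hu
      have := hu.map α
      rw [hker] at this
      exact not_isUnit_zero this
    have hunit : IsUnit (r.1 * a) := by
      rcases IsLocalRing.isUnit_or_isUnit_one_sub_self (1 - r.1 * a) with h | h
      · exact absurd h hnu
      · simpa using h
    rcases hunit with ⟨u, hu⟩
    have hinv : r.1 * (a * (u⁻¹ : Aˣ).1) = 1 := by
      rw [← mul_assoc, ← hu, Units.mul_inv]
    have hmem : α (a * (u⁻¹ : Aˣ).1) ∈ B := by
      have h2 : α r.1 * α (a * (u⁻¹ : Aˣ).1) = 1 := by rw [← map_mul, hinv, map_one]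
      have hr0 : α r.1 ≠ 0 := fun h => by simp [h] at hrb
      have : α (a * (u⁻¹ : Aˣ).1) = b.1 := mul_left_cancel₀ hr0 (h2.trans hrb.symm)
      rw [this]; exact b.2
    exact IsUnit.of_mul_eq_one ⟨_, hmem⟩ (by ext; exact hinv)

lemma pullback_principal {A C : Type} [CommRing A] [IsDomain A] [IsLocalRing A]
    [Field C] (α : A →+* C) (B : Subring C) [IsDomain B] [IsDiscreteValuationRing B]
    (hα : Function.Surjective α) :
    ∃ p : B.comap α, ∀ r : B.comap α, ¬ IsUnit r ↔ p ∣ r := by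
  obtain ⟨ϖ, hϖ⟩ := IsDiscreteValuationRing.exists_irreducible B
  obtain ⟨p, hp⟩ := hα ϖ.1
  have hpmem : p ∈ B.comap α := by
    rw [Subring.mem_comap, hp]; exact ϖ.2
  have hker : RingHom.ker α = maximalIdeal A := IsLocalRing.ker_eq_maximalIdeal α hα
  have hkz : ∀ a : A, ¬ IsUnit a → α a = 0 := by
    intro a hna
    have : a ∈ maximalIdeal A := by rwa [IsLocalRing.mem_maximalIdeal, mem_nonunits_iff]
    rw [← hker] at this
    exact this
  have hϖ0 : (ϖ : C) ≠ 0 := fun h => hϖ.ne_zero (by exact_mod_cast h)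
  have hpu : IsUnit p := by
    by_contra h
    exact hϖ0 (hp ▸ hkz p h)
  refine ⟨⟨p, hpmem⟩, fun r => ?_⟩
  constructor
  · intro hnr
    have hnb : ¬ IsUnit (⟨α r.1, r.2⟩ : B) := fun h => hnr ((pullback_unit_iff α B hα r).mpr h)
    have hmem : (⟨α r.1, r.2⟩ : B) ∈ maximalIdeal B := by
      rwa [IsLocalRing.mem_maximalIdeal, mem_nonunits_iff]
    rw [(IsDiscreteValuationRing.irreducible_iff_uniformizer ϖ).mp hϖ,
      Ideal.mem_span_singleton] at hmem
    obtain ⟨c, hc⟩ := hmem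
    have hc' : α r.1 = ϖ.1 * c.1 := by
      have := congrArg Subtype.val hc
      push_cast at this
      exact this
    obtain ⟨a, ha⟩ := hα c.1
    have hamem : a ∈ B.comap α := by rw [Subring.mem_comap, ha]; exact c.2
    set k : A := r.1 - p * a with hk
    have hαk : α k = 0 := by
      rw [hk, map_sub, map_mul, hp, ha, hc', sub_self]
    set s : A := (hpu.unit⁻¹ : Aˣ).1 * k with hs
    have hps : p * s = k := by
      rw [hs, ← mul_assoc]
      nth_rewrite 1 [← hpu.unit_spec]
      rw [Units.mul_inv, one_mul]
    have hsmem : s ∈ B.comap α := by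
      rw [Subring.mem_comap, hs, map_mul, hαk, mul_zero]
      exact B.zero_mem
    refine ⟨⟨a + s, B.comap α |>.add_mem hamem hsmem⟩, ?_⟩
    ext
    push_cast
    rw [mul_add, hps, hk]
    ring
  · rintro ⟨t, ht⟩ hr
    rw [ht] at hr
    have hup : IsUnit (⟨p, hpmem⟩ : B.comap α) := isUnit_of_mul_isUnit_left hr
    have := (pullback_unit_iff α B hα _).mp hup
    have hϖu : IsUnit ϖ := by
      have he : (⟨α p, hpmem⟩ : B) = ϖ := by ext; exact hp
      rwa [he] at this
    exact hϖ.not_isUnit hϖu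


/-- A local domain `D` of Krull dimension at least 1 has a principal maximal ideal if and
only if `D` is isomorphic to the pullback `α⁻¹(B)` of a discrete valuation ring `B` with
fraction field `C` along a surjective ring homomorphism `α` from a local domain `A` onto
the field `C`. -/
theorem principal_maximal_ideal_iff_pullback_of_DVR
    (D : Type) [CommRing D] [IsDomain D] [IsLocalRing D]
    (hdim : 1 ≤ ringKrullDim D) :
    (∃ x : D, IsLocalRing.maximalIdeal D = Ideal.span {x}) ↔
      (∃ (A C : Type) (_ : CommRing A) (_ : IsDomain A) (_ : IsLocalRing A)
          (_ : Field C) (α : A →+* C) (B : Subring C) (_ : IsDomain B)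
          (_ : IsDiscreteValuationRing B),
        Function.Surjective α ∧ IsFractionRing B C ∧
          Nonempty (D ≃+* (B.comap α))) := by
  constructor
  · rintro ⟨x, hx⟩
    have hx0 : x ≠ 0 := by
      intro h
      rw [h] at hx
      have hfield : IsField D := by
        rw [IsLocalRing.isField_iff_maximalIdeal_eq, hx, Ideal.span_singleton_eq_bot]
      rw [ringKrullDim_eq_zero_of_isField hfield] at hdim
      exact absurd hdim (by decide)
    exact forward_main hx hx0
  · rintro ⟨A, C, hCR, hDom, hLoc, hField, α, B, hBDom, hBDVR, hα, hFR, ⟨e⟩⟩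
    obtain ⟨p, hp⟩ := pullback_principal α B hα
    refine ⟨e.symm p, ?_⟩
    ext d
    rw [IsLocalRing.mem_maximalIdeal, mem_nonunits_iff, Ideal.mem_span_singleton]
    have h1 : IsUnit d ↔ IsUnit (e d) :=
      ⟨fun h => h.map e.toRingHom, fun h => by simpa using h.map e.symm.toRingHom⟩
    have h2 : p ∣ e d ↔ e.symm p ∣ d := by
      constructor
      · rintro ⟨t, ht⟩
        exact ⟨e.symm t, by
          have := congrArg e.symm ht
          rwa [RingEquiv.symm_apply_apply, map_mul] at this⟩
      · rintro ⟨t, ht⟩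
        exact ⟨e t, by
          have := congrArg e ht
          rwa [map_mul, RingEquiv.apply_symm_apply] at this⟩
    rw [← h2, ← hp (e d), h1]
end

section
/- Let A be a local domain with maximal ideal m_A, let α : A → A/m_A be the residue map, let B be a proper local subring of the field A/m_A with quotient field A/m_A, and let D = α⁻¹(B). If dim A ≥ 1 and dim B ≥ 1, then D is non-archimedean; more precisely, for every x in the maximal ideal of D with x ∉ m_A, one has m_A ⊆ ⋂_{k>0} x^k D, so ⋂_{k>0} x^k D ≠ 0. -/
/-!
Since `x ∉ m_A`, `x` is a unit of `A`. Hence for `a ∈ m_A` we can write `a = x ^ k * (x⁻¹ ^ k * a)`,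
and `x⁻¹ ^ k * a` lies in the ideal `m_A`, which `α` sends to `0 ∈ B`, i.e. into `D`. Finally
`m_A ≠ 0` because a local ring with zero maximal ideal is a field, of dimension `0`.
-/

open IsLocalRing

theorem IsLocalRing.maximalIdeal_ne_bot_of_one_le_ringKrullDim {R : Type*} [CommRing R]
    [IsLocalRing R] (h : 1 ≤ ringKrullDim R) : maximalIdeal R ≠ ⊥ := by
  intro hbot
  rw [ringKrullDim_eq_zero_of_isField (isField_iff_maximalIdeal_eq.mpr hbot)] at h
  exact absurd h (by norm_num)

theorem IsLocalRing.maximalIdeal_subset_comap_residue {R : Type*} [CommRing R] [IsLocalRing R]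
    (B : Subring (ResidueField R)) : (maximalIdeal R : Set R) ⊆ B.comap (residue R) := by
  intro a ha
  rw [SetLike.mem_coe, Subring.mem_comap, (residue_eq_zero_iff a).mpr ha]
  exact B.zero_mem

theorem Subring.exists_mem_eq_pow_mul_of_isUnit {R : Type*} [CommRing R] {I : Ideal R}
    {D : Subring R} (hID : (I : Set R) ⊆ D) {x : R} (hx : IsUnit x) {a : R} (ha : a ∈ I)
    (k : ℕ) : ∃ d ∈ D, a = x ^ k * d := by
  obtain ⟨u, rfl⟩ := hx
  refine ⟨↑(u⁻¹ ^ k) * a, hID (I.mul_mem_left _ ha), ?_⟩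
  rw [← mul_assoc, ← Units.val_pow_eq_pow_val, ← Units.val_mul, ← mul_pow, mul_inv_cancel,
    one_pow, Units.val_one, one_mul]

theorem pullback_of_local_subring_nonarchimedean_general
    (A : Type) [CommRing A] [IsLocalRing A]
    (B : Subring (IsLocalRing.ResidueField A))
    (hdimA : 1 ≤ ringKrullDim A)
    (D : Subring A) (hD : D = B.comap (IsLocalRing.residue A))
    (x : A)
    (hxnot : x ∉ IsLocalRing.maximalIdeal A) :
    (∀ a ∈ IsLocalRing.maximalIdeal A, ∀ k : ℕ, ∃ d ∈ D, a = x ^ k * d) ∧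
      (∃ y : A, y ≠ 0 ∧ ∀ k : ℕ, ∃ d ∈ D, y = x ^ k * d) := by
  have hmD : (maximalIdeal A : Set A) ⊆ D := hD ▸ maximalIdeal_subset_comap_residue B
  have hdiv : ∀ a ∈ maximalIdeal A, ∀ k : ℕ, ∃ d ∈ D, a = x ^ k * d :=
    fun _ ha => Subring.exists_mem_eq_pow_mul_of_isUnit hmD (notMem_maximalIdeal.mp hxnot) ha
  obtain ⟨y, hy, hy0⟩ := Submodule.exists_mem_ne_zero_of_ne_bot
    (maximalIdeal_ne_bot_of_one_le_ringKrullDim hdimA)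
  exact ⟨hdiv, y, hy0, hdiv y hy⟩

/-- Let `A` be a local domain with residue map `α : A → A/m_A`, let `B` be a proper local
subring of the residue field with quotient field `A/m_A`, and let `D = α⁻¹(B)`.  If
`dim A ≥ 1` and `dim B ≥ 1`, then for every `x` in the maximal ideal of `D` (i.e. with
`α x` in the maximal ideal of `B`) such that `x ∉ m_A`, one has
`m_A ⊆ ⋂_{k>0} x^k D`; in particular `⋂_{k>0} x^k D ≠ 0`, so `D` is non-archimedean. -/
theorem pullback_of_local_subring_nonarchimedean
    (A : Type) [CommRing A] [IsDomain A] [IsLocalRing A]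
    (B : Subring (IsLocalRing.ResidueField A)) [IsLocalRing B]
    (hBproper : B ≠ ⊤)
    (hBfrac : IsFractionRing B (IsLocalRing.ResidueField A))
    (hdimA : 1 ≤ ringKrullDim A) (hdimB : 1 ≤ ringKrullDim B)
    (D : Subring A) (hD : D = B.comap (IsLocalRing.residue A))
    (x : A) (hxD : x ∈ B.comap (IsLocalRing.residue A))
    (hxmax : (⟨IsLocalRing.residue A x, hxD⟩ : B) ∈ IsLocalRing.maximalIdeal B)
    (hxnot : x ∉ IsLocalRing.maximalIdeal A) :
    (∀ a ∈ IsLocalRing.maximalIdeal A, ∀ k : ℕ, ∃ d ∈ D, a = x ^ k * d) ∧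
      (∃ y : A, y ≠ 0 ∧ ∀ k : ℕ, ∃ d ∈ D, y = x ^ k * d) :=
  pullback_of_local_subring_nonarchimedean_general A B hdimA D hD x hxnot
end

section
/- Let (R, m) be a Noetherian local domain and let V be a rank 1 valuation ring with valuation ν that birationally dominates R. Let {(R_n, m_n)} be the sequence of local quadratic transforms of R = R_0 along V. If the multiplicity sequence diverges, i.e., Σ_{n≥0} ν(m_n) = ∞, then V = ⋃_{n≥0} R_n. -/
open Filter

section LQT

variable (F : Type) [Field F] {Γ : Type} [AddCommGroup Γ] [LinearOrder Γ] [IsOrderedAddMonoid Γ]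

/-- The maximal ideal (as a set) of a local subring `A` of `F` dominated by the valuation
ring of the (additive) valuation `v`: the elements of `A` of positive value, together
with `0`. -/
def lqtMaxSet (v : F → Γ) (A : Subring F) : Set F :=
  {a | a ∈ A ∧ (a = 0 ∨ 0 < v a)}

/-- The ring `A[m_A/x]`: the subring of `F` generated by `A` together with all quotients
`a / x` for `a` in the maximal ideal of `A`. -/
def lqtBlowup (v : F → Γ) (A : Subring F) (x : F) : Subring F :=
  Subring.closure ((A : Set F) ∪ {y | ∃ a ∈ lqtMaxSet F v A, y * x = a})

/-- The localization of a subring `B` of `F` at the center of the valuation `v`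
(the prime ideal of `B` of elements of positive value): all fractions `b / s` with
`b, s ∈ B` and `s` a unit of the valuation ring (`v s = 0`). -/
def lqtLocalize (v : F → Γ) (B : Subring F) : Set F :=
  {y | ∃ b ∈ B, ∃ s ∈ B, s ≠ 0 ∧ v s = 0 ∧ y * s = b}

/-- `A'` is the local quadratic transform of `A` along the valuation `v`: there is
`x ∈ m_A` of minimal value (so that `m_A V = x V`), and `A'` is the localization of
`A[m_A/x]` at the center of `v`. -/
def IsLQTAlong (v : F → Γ) (A A' : Subring F) : Prop :=
  ∃ x ∈ lqtMaxSet F v A, x ≠ 0 ∧ (∀ a ∈ lqtMaxSet F v A, a ≠ 0 → v x ≤ v a) ∧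
    (A' : Set F) = lqtLocalize F v (lqtBlowup F v A x)

end LQT

/-!
Suppose `y ∈ V` lies in no `Rₙ`. Write `y = a / b` with `a, b ∈ R₀`. Whenever `y = a / b` with
`a, b ∈ Rₙ`, the element `b` cannot be a unit of `Rₙ`, so `b` and `a` lie in `mₙ`; dividing both
by the element `xₙ` of least value in `mₙ` gives a representation `y = (a / xₙ) / (b / xₙ)` over
`Rₙ₊₁`, and the value of the denominator drops by `ν(mₙ)`. After `N` steps the denominator, an
element of `V`, has value `ν(b) - ∑_{n < N} ν(mₙ)`, which is negative for large `N`.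
-/

section Valuation

variable {F : Type} [Field F]

def IsDenominatorIn (A : Subring F) (y b : F) : Prop :=
  b ∈ A ∧ b ≠ 0 ∧ y * b ∈ A

theorem val_one_eq_zero {v : F → ℝ}
    (hmul : ∀ a b : F, a ≠ 0 → b ≠ 0 → v (a * b) = v a + v b) : v 1 = 0 := by
  have h := hmul 1 1 one_ne_zero one_ne_zero
  rw [mul_one] at h
  linarith

theorem val_inv_eq_neg {v : F → ℝ}
    (hmul : ∀ a b : F, a ≠ 0 → b ≠ 0 → v (a * b) = v a + v b) {x : F} (hx : x ≠ 0) :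
    v x⁻¹ = -v x := by
  have h := hmul x x⁻¹ hx (inv_ne_zero hx)
  rw [mul_inv_cancel₀ hx, val_one_eq_zero hmul] at h
  linarith

theorem subset_lqtLocalize {Γ : Type} [AddCommGroup Γ] [LinearOrder Γ] [IsOrderedAddMonoid Γ]
    {v : F → Γ} (hv1 : v 1 = 0) (B : Subring F) : (B : Set F) ⊆ lqtLocalize F v B :=
  fun b hb => ⟨b, hb, 1, one_mem B, one_ne_zero, hv1, mul_one b⟩

theorem mul_inv_mem_lqtBlowup {Γ : Type} [AddCommGroup Γ] [LinearOrder Γ]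
    [IsOrderedAddMonoid Γ] {v : F → Γ} {A : Subring F} {x c : F} (hx : x ≠ 0)
    (hc : c ∈ lqtMaxSet F v A) : c * x⁻¹ ∈ lqtBlowup F v A x :=
  Subring.subset_closure (Or.inr ⟨c, hc, inv_mul_cancel_right₀ hx c⟩)

theorem sInf_val_lqtMaxSet_eq {v : F → ℝ} {A : Subring F} {x : F}
    (hx : x ∈ lqtMaxSet F v A) (hx0 : x ≠ 0)
    (hmin : ∀ a ∈ lqtMaxSet F v A, a ≠ 0 → v x ≤ v a) :
    sInf (v '' {a | a ∈ lqtMaxSet F v A ∧ a ≠ 0}) = v x := by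
  refine IsLeast.csInf_eq ⟨⟨x, ⟨hx, hx0⟩, rfl⟩, ?_⟩
  rintro _ ⟨a, ⟨ha, ha0⟩, rfl⟩
  exact hmin a ha ha0

theorem IsDenominatorIn.mem_lqtMaxSet {v : F → ℝ} {A : Subring F} {y b : F}
    (hunit : ∀ a ∈ A, a ≠ 0 → v a = 0 → ∃ c ∈ A, a * c = 1)
    (hy : y ∉ A) (hb : IsDenominatorIn A y b) (hvb : 0 ≤ v b) : b ∈ lqtMaxSet F v A := by
  obtain ⟨hbA, hb0, hybA⟩ := hb
  refine ⟨hbA, Or.inr (hvb.lt_of_ne fun hv0 => hy ?_)⟩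
  obtain ⟨c, hcA, hbc⟩ := hunit b hbA hb0 hv0.symm
  have hyc : y = y * b * c := by rw [mul_assoc, hbc, mul_one]
  rw [hyc]
  exact mul_mem hybA hcA

theorem IsLQTAlong.exists_isDenominatorIn {v : F → ℝ}
    (hmul : ∀ a b : F, a ≠ 0 → b ≠ 0 → v (a * b) = v a + v b) {A A' : Subring F}
    (hLQT : IsLQTAlong F v A A') (hunit : ∀ a ∈ A, a ≠ 0 → v a = 0 → ∃ c ∈ A, a * c = 1)
    {y b : F} (hy : y ∉ A) (hvy : 0 ≤ v y) (hb : IsDenominatorIn A y b) (hvb : 0 ≤ v b) :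
    ∃ b', IsDenominatorIn A' y b' ∧
      v b' = v b - sInf (v '' {a | a ∈ lqtMaxSet F v A ∧ a ≠ 0}) := by
  obtain ⟨x, hx, hx0, hmin, hA'⟩ := hLQT
  have hmemA' : ∀ c ∈ lqtMaxSet F v A, c * x⁻¹ ∈ A' := fun c hc => by
    rw [← SetLike.mem_coe, hA']
    exact subset_lqtLocalize (val_one_eq_zero hmul) _ (mul_inv_mem_lqtBlowup hx0 hc)
  have hbmax := hb.mem_lqtMaxSet hunit hy hvb
  have hyb0 : y * b ≠ 0 := mul_ne_zero (fun h => hy (h ▸ zero_mem A)) hb.2.1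
  have hybmax : y * b ∈ lqtMaxSet F v A := by
    refine ⟨hb.2.2, Or.inr ?_⟩
    rw [hmul y b (left_ne_zero_of_mul hyb0) hb.2.1]
    linarith [hbmax.2.resolve_left hb.2.1]
  refine ⟨b * x⁻¹, ⟨hmemA' b hbmax, mul_ne_zero hb.2.1 (inv_ne_zero hx0), ?_⟩, ?_⟩
  · rw [← mul_assoc]
    exact hmemA' _ hybmax
  · rw [sInf_val_lqtMaxSet_eq hx hx0 hmin, hmul b x⁻¹ hb.2.1 (inv_ne_zero hx0),
      val_inv_eq_neg hmul hx0, sub_eq_add_neg]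

theorem exists_isDenominatorIn_val_eq_sub_sum {v : F → ℝ}
    (hmul : ∀ a b : F, a ≠ 0 → b ≠ 0 → v (a * b) = v a + v b) {R : ℕ → Subring F}
    (hnonneg : ∀ n, ∀ a ∈ R n, a ≠ 0 → 0 ≤ v a)
    (hdom : ∀ n, ∀ a ∈ R n, a ≠ 0 → v a = 0 → ∃ b ∈ R n, a * b = 1)
    (hLQT : ∀ n, IsLQTAlong F v (R n) (R (n + 1)))
    {μ : ℕ → ℝ} (hμ : ∀ n, μ n = sInf (v '' {a | a ∈ lqtMaxSet F v (R n) ∧ a ≠ 0}))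
    {y b₀ : F} (hy : ∀ n, y ∉ R n) (hvy : 0 ≤ v y) (hb₀ : IsDenominatorIn (R 0) y b₀) (n : ℕ) :
    ∃ b, IsDenominatorIn (R n) y b ∧ v b = v b₀ - ∑ k ∈ Finset.range n, μ k := by
  induction n with
  | zero => exact ⟨b₀, hb₀, by simp⟩
  | succ n ih =>
    obtain ⟨b, hb, hvb⟩ := ih
    obtain ⟨b', hb', hvb'⟩ := (hLQT n).exists_isDenominatorIn hmul (hdom n) (hy n) hvy hb
      (hnonneg n b hb.1 hb.2.1)
    exact ⟨b', hb', by rw [hvb', hvb, Finset.sum_range_succ, hμ n]; ring⟩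

end Valuation

theorem union_eq_valuation_of_divergent_multiplicity_general
    (F : Type) [Field F] (v : F → ℝ)
    (hmul : ∀ a b : F, a ≠ 0 → b ≠ 0 → v (a * b) = v a + v b)
    (V : Subring F) (hV : ∀ a : F, a ≠ 0 → (a ∈ V ↔ 0 ≤ v a))
    (R : ℕ → Subring F)
    (hsub : ∀ n, (R n : Set F) ⊆ V)
    (hdom : ∀ n, ∀ a ∈ R n, a ≠ 0 → v a = 0 → ∃ b ∈ R n, a * b = 1)
    (hfrac : ∀ y : F, ∃ a ∈ R 0, ∃ b ∈ R 0, b ≠ 0 ∧ y * b = a)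
    (hLQT : ∀ n, IsLQTAlong F v (R n) (R (n + 1)))
    (μ : ℕ → ℝ)
    (hμ : ∀ n, μ n = sInf (v '' {a | a ∈ lqtMaxSet F v (R n) ∧ a ≠ 0}))
    (hdiv : Tendsto (fun N => ∑ n ∈ Finset.range N, μ n) atTop atTop) :
    (V : Set F) = ⋃ n, (R n : Set F) := by
  refine (Set.iUnion_subset hsub).antisymm' fun y hyV => ?_
  by_contra hyR
  have hy : ∀ n, y ∉ R n := fun n h => hyR (Set.mem_iUnion.2 ⟨n, h⟩)
  have hnonneg : ∀ n, ∀ a ∈ R n, a ≠ 0 → 0 ≤ v a := fun n a ha ha0 =>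
    (hV a ha0).1 (hsub n ha)
  have hy0 : y ≠ 0 := fun h => hy 0 (h ▸ zero_mem _)
  obtain ⟨a, ha, b₀, hb₀, hb₀0, hab⟩ := hfrac y
  obtain ⟨N, hN⟩ := (hdiv.eventually (eventually_gt_atTop (v b₀))).exists
  obtain ⟨b, hb, hvb⟩ := exists_isDenominatorIn_val_eq_sub_sum hmul hnonneg hdom hLQT hμ hy
    ((hV y hy0).1 hyV) ⟨hb₀, hb₀0, hab ▸ ha⟩ N
  linarith [hnonneg N b hb.1 hb.2.1]

/-- Let `(R₀, m₀)` be a Noetherian local domain with quotient field `F` and let `V` be a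
rank 1 valuation ring (given by a real-valued valuation `v` on `F`) birationally
dominating `R₀`.  Let `{Rₙ}` be the sequence of local quadratic transforms of `R₀` along
`V`.  If the multiplicity sequence diverges, i.e. `∑ₙ v(mₙ) = ∞`, then
`V = ⋃ₙ Rₙ`. -/
theorem union_eq_valuation_of_divergent_multiplicity
    (F : Type) [Field F] (v : F → ℝ)
    (hmul : ∀ a b : F, a ≠ 0 → b ≠ 0 → v (a * b) = v a + v b)
    (hadd : ∀ a b : F, a ≠ 0 → b ≠ 0 → a + b ≠ 0 → min (v a) (v b) ≤ v (a + b))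
    (V : Subring F) (hV : ∀ a : F, a ≠ 0 → (a ∈ V ↔ 0 ≤ v a))
    (R : ℕ → Subring F)
    (hNoeth : ∀ n, IsNoetherianRing (R n)) (hLocal : ∀ n, IsLocalRing (R n))
    (hsub : ∀ n, (R n : Set F) ⊆ V)
    (hdom : ∀ n, ∀ a ∈ R n, a ≠ 0 → v a = 0 → ∃ b ∈ R n, a * b = 1)
    (hfrac : ∀ y : F, ∃ a ∈ R 0, ∃ b ∈ R 0, b ≠ 0 ∧ y * b = a)
    (hLQT : ∀ n, IsLQTAlong F v (R n) (R (n + 1)))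
    (μ : ℕ → ℝ)
    (hμ : ∀ n, μ n = sInf (v '' {a | a ∈ lqtMaxSet F v (R n) ∧ a ≠ 0}))
    (hdiv : Tendsto (fun N => ∑ n ∈ Finset.range N, μ n) atTop atTop) :
    (V : Set F) = ⋃ n, (R n : Set F) :=
  union_eq_valuation_of_divergent_multiplicity_general F v hmul V hV R hsub hdom hfrac hLQT μ hμ
    hdiv
end

section
/- Let S be a local domain with maximal ideal m_S that is archimedean (⋂ₙ aⁿS = 0 for all nonunits a) and has Krull dimension at least 2. If m_S is a principal ideal, then ⋂ᵢ m_Sⁱ is a nonzero prime ideal of S, contradicting archimedeanness; hence m_S is not principal. -/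
/-!
If `𝔪 = (x)`, a nonzero prime `𝔮 ⊊ 𝔪` (which exists since `dim S ≥ 2`) satisfies `𝔮 = x 𝔮`
because `x ∉ 𝔮`, so `𝔮 ⊆ ⋂ᵢ xⁱS`; in particular this intersection is nonzero. It is prime
because it consists exactly of the elements of infinite `x`-adic multiplicity, and multiplicity
with respect to a prime element is additive. Archimedeanness forces the intersection to vanish.
-/

namespace Ideal

variable {R : Type*} [CommRing R]

theorem mem_iInf_span_pow_succ_iff {x c : R} :
    c ∈ ⨅ i : ℕ, span {x ^ (i + 1)} ↔ ¬FiniteMultiplicity x c := by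
  simp only [mem_iInf, mem_span_singleton, FiniteMultiplicity.def, not_exists, not_not]

theorem isPrime_iInf_span_pow_succ [IsDomain R] {x : R} (hx : Prime x) :
    (⨅ i : ℕ, span {x ^ (i + 1)}).IsPrime where
  ne_top' h := by
    have h1 : (1 : R) ∈ ⨅ i : ℕ, span {x ^ (i + 1)} := h ▸ Submodule.mem_top
    exact mem_iInf_span_pow_succ_iff.mp h1 ⟨0, by simpa using hx.not_dvd_one⟩
  mem_or_mem' {a b} hab := by
    simp only [mem_iInf_span_pow_succ_iff] at hab ⊢
    by_contra! h
    exact hab (hx.finiteMultiplicity_mul h.1 h.2)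

theorem IsPrime.le_span_pow_of_le_span {p : Ideal R} (hp : p.IsPrime) {x : R} (hxp : x ∉ p)
    (hpx : p ≤ span {x}) (n : ℕ) : p ≤ span {x ^ n} := by
  induction n with
  | zero => simp
  | succ n ih =>
    intro y hy
    obtain ⟨s, rfl⟩ := mem_span_singleton'.mp (ih hy)
    have hs : s ∈ p := (hp.mem_or_mem hy).resolve_right (fun h => hxp (hp.mem_of_pow_mem n h))
    obtain ⟨t, rfl⟩ := mem_span_singleton'.mp (hpx hs)
    exact mem_span_singleton'.mpr ⟨t, by ring⟩

theorem IsPrime.le_iInf_span_pow_succ_of_le_span {p : Ideal R} (hp : p.IsPrime) {x : R}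
    (hxp : x ∉ p) (hpx : p ≤ span {x}) : p ≤ ⨅ i : ℕ, span {x ^ (i + 1)} :=
  le_iInf fun i => hp.le_span_pow_of_le_span hxp hpx (i + 1)

end Ideal

theorem IsLocalRing.exists_isPrime_ne_bot_lt_maximalIdeal {R : Type*} [CommRing R]
    [IsLocalRing R] (hdim : 2 ≤ ringKrullDim R) :
    ∃ q : Ideal R, q.IsPrime ∧ q ≠ ⊥ ∧ q < maximalIdeal R := by
  obtain ⟨l, hl⟩ := Order.le_krullDim_iff.mp (show ((2 : ℕ) : WithBot ℕ∞) ≤ _ from hdim)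
  have h01 : l 0 < l 1 := l.strictMono (by simp [Fin.lt_def, hl])
  have h12 : l 1 < l 2 := l.strictMono (by simp [Fin.lt_def, hl])
  refine ⟨(l 1).asIdeal, (l 1).isPrime, ?_, ?_⟩
  · exact ne_bot_of_gt (show (l 0).asIdeal < (l 1).asIdeal from h01)
  · exact lt_of_lt_of_le h12 (le_maximalIdeal (l 2).isPrime.ne_top)

/-- Let `S` be a local domain of Krull dimension at least 2.  If the maximal ideal
`m_S = xS` is principal, then `P = ⋂_{i>0} xⁱS` is a nonzero prime ideal of `S`; hence if
moreover `S` is archimedean (`⋂ₙ aⁿS = 0` for every nonunit `a`), then `m_S` is not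
principal. -/
theorem archimedean_maximalIdeal_not_principal
    (S : Type) [CommRing S] [IsDomain S] [IsLocalRing S]
    (hdim : 2 ≤ ringKrullDim S) :
    (∀ x : S, IsLocalRing.maximalIdeal S = Ideal.span {x} →
      (⨅ i : ℕ, Ideal.span {x ^ (i + 1)}).IsPrime ∧
        (⨅ i : ℕ, Ideal.span {x ^ (i + 1)}) ≠ ⊥) ∧
    ((∀ a : S, ¬ IsUnit a → (⨅ n : ℕ, Ideal.span {a ^ (n + 1)}) = ⊥) →
      ¬ (IsLocalRing.maximalIdeal S).IsPrincipal) := by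
  obtain ⟨q, hq, hq_ne, hq_lt⟩ := IsLocalRing.exists_isPrime_ne_bot_lt_maximalIdeal hdim
  have principal : ∀ x : S, IsLocalRing.maximalIdeal S = Ideal.span {x} →
      (⨅ i : ℕ, Ideal.span {x ^ (i + 1)}).IsPrime ∧
        (⨅ i : ℕ, Ideal.span {x ^ (i + 1)}) ≠ ⊥ := by
    intro x hx
    rw [hx] at hq_lt
    have hxq : x ∉ q := fun h => hq_lt.not_ge ((Ideal.span_singleton_le_iff_mem _).mpr h)
    have hqP := hq.le_iInf_span_pow_succ_of_le_span hxq hq_lt.le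
    have hx0 : x ≠ 0 := by
      rintro rfl
      exact hq_ne (le_bot_iff.mp (by simpa using hq_lt.le))
    have hx_prime : Prime x :=
      (Ideal.span_singleton_prime hx0).mp (hx ▸ (IsLocalRing.maximalIdeal.isMaximal S).isPrime)
    exact ⟨Ideal.isPrime_iInf_span_pow_succ hx_prime, ne_bot_of_le_ne_bot hq_ne hqP⟩
  refine ⟨principal, ?_⟩
  rintro harch ⟨x, hx⟩
  have hx_nonunit : ¬IsUnit x :=
    (IsLocalRing.mem_maximalIdeal x).mp (hx ▸ Ideal.mem_span_singleton_self x)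
  exact (principal x hx).2 (harch x hx_nonunit)
end

section
/- Let S be a local domain with a nonzero prime ideal Q such that Q S_Q = Q, the quotient S/Q is a valuation ring of the field S_Q/Q, and S_Q is a valuation domain. Then S is a valuation domain. -/
/-!
Since `Q S_Q = Q`, the ring `S` is the preimage of `S ⧸ Q` under the residue map of the local
ring `S_Q`, whose maximal ideal is `Q S_Q`. An element of `S_Q` whose residue lies in `S ⧸ Q`
therefore lies in `S`, and one whose residue has its inverse in `S ⧸ Q` is a unit with inverse in
`S`. As `S ⧸ Q` is a valuation ring of the residue field, every element of `S_Q` lies in `S` or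
has its inverse there, and divisibility in the valuation ring `S_Q` descends to `S`.
-/

open IsLocalRing

/-- For an embedding into a field this says that the image of `f` is a valuation subring. -/
def RingHom.MemOrInvMemRange {A B : Type*} [Ring A] [Ring B] (f : A →+* B) : Prop :=
  ∀ x : B, x ∈ f.range ∨ ∃ y ∈ f.range, x * y = 1

namespace RingHom.MemOrInvMemRange

variable {A B C : Type*} [CommRing A] [CommRing B] [CommRing C]

theorem comp_of_surjective {f : A →+* B} {g : C →+* A} (hf : f.MemOrInvMemRange)
    (hg : Function.Surjective g) : (f.comp g).MemOrInvMemRange := by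
  have hrange : (f.comp g).range = f.range := SetLike.coe_injective <| by
    simp only [RingHom.coe_range, RingHom.coe_comp, hg.range_comp]
  rwa [RingHom.MemOrInvMemRange, hrange]

theorem of_forall_mul_eq [PreValuationRing A] [IsDomain B] {φ : A →+* B}
    (hφ : Function.Injective φ) (hfrac : ∀ y : B, ∃ a b : A, b ≠ 0 ∧ y * φ b = φ a) :
    φ.MemOrInvMemRange := by
  intro y
  obtain ⟨a, b, hb, hy⟩ := hfrac y
  have hφb : φ b ≠ 0 := (map_ne_zero_iff φ hφ).mpr hb
  obtain ⟨e, hab | hba⟩ := PreValuationRing.cond a b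
  · refine Or.inr ⟨φ e, ⟨e, rfl⟩, ?_⟩
    have hφa : φ a ≠ 0 := by rintro h; rw [← hab, map_mul, h, zero_mul] at hφb; exact hφb rfl
    refine mul_left_cancel₀ hφa ?_
    rw [← hab, map_mul] at hy
    linear_combination hy
  · refine Or.inl ⟨e, mul_left_cancel₀ hφb ?_⟩
    rw [← hba, map_mul] at hy
    linear_combination -hy

theorem of_residue [IsLocalRing B] {f : A →+* B} {M : Ideal B}
    (hM : M ≤ maximalIdeal B) (hMf : (M : Set B) ⊆ f.range)
    (h : ((Ideal.Quotient.mk M).comp f).MemOrInvMemRange) : f.MemOrInvMemRange := by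
  have lift : ∀ x s, Ideal.Quotient.mk M x = Ideal.Quotient.mk M (f s) → x ∈ f.range := by
    intro x s hxs
    obtain ⟨q, hq⟩ := hMf (Ideal.Quotient.eq.mp hxs)
    exact ⟨s + q, by rw [map_add, hq]; ring⟩
  intro x
  rcases h (Ideal.Quotient.mk M x) with ⟨s, hs⟩ | ⟨_, ⟨s, rfl⟩, hxs⟩
  · exact Or.inl (lift x s hs.symm)
  · rw [RingHom.comp_apply] at hxs
    have hmem : 1 - x * f s ∈ maximalIdeal B :=
      hM (Ideal.Quotient.eq.mp (by rw [map_one, map_mul, hxs]))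
    have hunit : IsUnit (x * f s) := by
      simpa using isUnit_one_sub_self_of_mem_nonunits _ hmem
    obtain ⟨u, hu⟩ := hunit
    obtain ⟨v, hv⟩ := lift (↑u⁻¹ : B) 1 (by
      rw [map_one, ← mul_one (Ideal.Quotient.mk M _), ← hxs, ← map_mul, ← map_mul, ← hu,
        Units.inv_mul, map_one])
    refine Or.inr ⟨f (s * v), ⟨s * v, rfl⟩, ?_⟩
    rw [map_mul, hv, ← mul_assoc, ← hu, Units.mul_inv]

theorem preValuationRing [PreValuationRing B] {f : A →+* B} (hf : Function.Injective f)
    (h : f.MemOrInvMemRange) : PreValuationRing A := by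
  suffices key : ∀ a b : A, ∀ t : B, f a * t = f b → ∃ c, a * c = b ∨ b * c = a by
    refine ⟨fun a b => ?_⟩
    obtain ⟨t, ht | ht⟩ := PreValuationRing.cond (f a) (f b)
    · exact key a b t ht
    · obtain ⟨c, hc⟩ := key b a t ht
      exact ⟨c, hc.symm⟩
  intro a b t ht
  rcases h t with ⟨c, rfl⟩ | ⟨_, ⟨c, rfl⟩, htc⟩
  · exact ⟨c, Or.inl (hf (by rw [map_mul, ht]))⟩
  · exact ⟨c, Or.inr (hf (by rw [map_mul, ← ht, mul_assoc, htc, mul_one]))⟩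

end RingHom.MemOrInvMemRange

theorem valuationRing_of_pullback_decomposition_general
    (S : Type) [CommRing S] [IsDomain S]
    (Q : Ideal S) (hQp : Q.IsPrime)
    (hQloc : ∀ y ∈ Ideal.map (algebraMap S (Localization.AtPrime Q)) Q,
      ∃ q ∈ Q, y = algebraMap S (Localization.AtPrime Q) q)
    (hSQval : ValuationRing (Localization.AtPrime Q))
    (hSQquotval : ValuationRing (S ⧸ Q))
    (hfrac : ∀ y : (Localization.AtPrime Q) ⧸
        (Ideal.map (algebraMap S (Localization.AtPrime Q)) Q),
      ∃ a b : S ⧸ Q, b ≠ 0 ∧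
        y * (Ideal.quotientMap _ (algebraMap S (Localization.AtPrime Q))
              Ideal.le_comap_map) b
          = (Ideal.quotientMap _ (algebraMap S (Localization.AtPrime Q))
              Ideal.le_comap_map) a) :
    ValuationRing S := by
  set f := algebraMap S (Localization.AtPrime Q)
  have hmax : Q.map f = maximalIdeal _ := Localization.AtPrime.map_eq_maximalIdeal
  have : (Q.map f).IsMaximal := hmax ▸ maximalIdeal.isMaximal _
  have hφ : Function.Injective (Ideal.quotientMap _ f Ideal.le_comap_map) :=
    Ideal.quotientMap_injective' (by rw [hmax]; exact Localization.AtPrime.under_maximalIdeal.le)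
  have hres := (RingHom.MemOrInvMemRange.of_forall_mul_eq hφ hfrac).comp_of_surjective
    Ideal.Quotient.mk_surjective
  have hf : f.MemOrInvMemRange := .of_residue hmax.le
    (fun y hy => by obtain ⟨q, -, rfl⟩ := hQloc y hy; exact ⟨q, rfl⟩) hres
  have := hf.preValuationRing (IsLocalization.injective _ Q.primeCompl_le_nonZeroDivisors)
  exact ⟨⟩

/-- Let `S` be a local domain with a nonzero prime `Q` such that `Q S_Q = Q`, the
quotient `S/Q` is a valuation ring with quotient field `S_Q/Q`, and `S_Q` is a valuation
domain.  Then `S` is a valuation domain. -/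
theorem valuationRing_of_pullback_decomposition
    (S : Type) [CommRing S] [IsDomain S] [IsLocalRing S]
    (Q : Ideal S) (hQp : Q.IsPrime) (hQne : Q ≠ ⊥)
    (hQloc : ∀ y ∈ Ideal.map (algebraMap S (Localization.AtPrime Q)) Q,
      ∃ q ∈ Q, y = algebraMap S (Localization.AtPrime Q) q)
    (hSQval : ValuationRing (Localization.AtPrime Q))
    (hSQquotval : ValuationRing (S ⧸ Q))
    (hfrac : ∀ y : (Localization.AtPrime Q) ⧸
        (Ideal.map (algebraMap S (Localization.AtPrime Q)) Q),
      ∃ a b : S ⧸ Q, b ≠ 0 ∧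
        y * (Ideal.quotientMap _ (algebraMap S (Localization.AtPrime Q))
              Ideal.le_comap_map) b
          = (Ideal.quotientMap _ (algebraMap S (Localization.AtPrime Q))
              Ideal.le_comap_map) a) :
    ValuationRing S :=
  valuationRing_of_pullback_decomposition_general S Q hQp hQloc hSQval hSQquotval hfrac
end

section
/- Let R be a Noetherian local domain and P a nonzero nonmaximal prime ideal of R. There is a one-to-one correspondence between infinite sequences {R_n} of local quadratic transforms of R_0 = R along R_P (i.e., with ⋃_n R_n ⊆ R_P) and infinite sequences of local quadratic transforms of R/P; the sequence corresponding to {R_n} is {R_n/(PR_P ∩ R_n)}. -/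
section GenLQT

variable (F : Type) [Field F]

/-- The maximal ideal (as a set) of a local subring `A` of a field `F`: the nonunits of
`A`. -/
def genMaxSet (A : Subring F) : Set F :=
  {a | a ∈ A ∧ ¬ ∃ b ∈ A, a * b = 1}

/-- The ring `A[m_A/x]`: the subring of `F` generated by `A` and the quotients `a/x` for
`a` in the maximal ideal of `A`. -/
def genBlowup (A : Subring F) (x : F) : Subring F :=
  Subring.closure ((A : Set F) ∪ {y | ∃ a ∈ genMaxSet F A, y * x = a})

/-- `A'` is a local quadratic transform of the local subring `A` of `F`: for some nonzero
`x ∈ m_A`, `A'` is the localization of `A[m_A/x]` at a prime ideal containing `m_A`. -/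
def IsGenLQT (A A' : Subring F) : Prop :=
  ∃ x ∈ genMaxSet F A, x ≠ 0 ∧
    ∃ Q : Ideal (genBlowup F A x), Q.IsPrime ∧
      (∀ a ∈ genMaxSet F A, ∃ q : genBlowup F A x, q ∈ Q ∧ (q : F) = a) ∧
      (A' : Set F) = {y | ∃ b s : genBlowup F A x, s ∉ Q ∧ y * (s : F) = (b : F)}

end GenLQT

/-!
The residue map `α : R_P → κ(P)` has kernel `P R_P`, and every element outside it is a unit of
`R_P`. On a local subring `A ⊆ R_P` it is a surjective, hence local, homomorphism onto
`Ā = α(A)`, so `α(m_A) = m_Ā`. Along `R_P` a chart `x` of a quadratic transform of `A` is not in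
`P R_P`: `m_R ⊆ m_A` contains some `w ∉ P R_P`, and `w = (w/x)·x` with `w/x ∈ R_P`. Hence `x` is
a unit of `R_P`, `α` maps `A[m_A/x]` onto `Ā[m_Ā/x̄]`, and it maps localizations at primes
containing `ker α` onto localizations at their images; pulling primes back gives the inverse
step. For injectivity, if transforms `T, T'` of `A` have the same image, then an element of
`T'` invertible in `T` is invertible in `T'` (the local map `α` detects units), which forces
`T ⊆ T'`, and symmetrically.
-/

theorem bijOn_seq_of_step {X Y : Type*} (f : X → Y) (r : X → X → Prop) (r' : Y → Y → Prop)
    (p : X → Prop) {x₀ : X} (h₀ : p x₀) (hp : ∀ x x', p x → r x x' → p x')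
    (hr : ∀ x x', p x → r x x' → r' (f x) (f x'))
    (hinj : ∀ x x₁ x₂, p x → r x x₁ → r x x₂ → f x₁ = f x₂ → x₁ = x₂)
    (hsurj : ∀ x y, p x → r' (f x) y → ∃ x', r x x' ∧ f x' = y) :
    Set.BijOn (fun (s : ℕ → X) n => f (s n)) {s | s 0 = x₀ ∧ ∀ n, r (s n) (s (n + 1))}
      {t | t 0 = f x₀ ∧ ∀ n, r' (t n) (t (n + 1))} := by
  have hps : ∀ s : ℕ → X, s 0 = x₀ → (∀ n, r (s n) (s (n + 1))) → ∀ n, p (s n) := by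
    intro s hs0 hs n
    induction n with
    | zero => exact hs0 ▸ h₀
    | succ n ih => exact hp _ _ ih (hs n)
  refine ⟨fun s ⟨hs0, hs⟩ => ⟨congrArg f hs0, fun n => hr _ _ (hps s hs0 hs n) (hs n)⟩,
    fun s₁ ⟨hs₁0, hs₁⟩ s₂ ⟨hs₂0, hs₂⟩ heq => funext fun n => ?_,
    fun t ⟨ht0, ht⟩ => ?_⟩
  · induction n with
    | zero => rw [hs₁0, hs₂0]
    | succ n ih =>
      exact hinj _ _ _ (hps s₁ hs₁0 hs₁ n) (hs₁ n) (ih ▸ hs₂ n) (congrFun heq (n + 1))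
  · choose g hg using fun n (x : {x // p x ∧ f x = t n}) =>
      hsurj x.1 (t (n + 1)) x.2.1 (by rw [x.2.2]; exact ht n)
    let s : ∀ n, {x // p x ∧ f x = t n} := fun n =>
      Nat.rec ⟨x₀, h₀, ht0.symm⟩
        (fun n x => ⟨g n x, hp _ _ x.2.1 (hg n x).1, (hg n x).2⟩) n
    exact ⟨fun n => (s n).1, ⟨rfl, fun n => (hg n (s n)).1⟩, funext fun n => (s n).2.2⟩

theorem setOf_seq_and_pred_succ {X : Type*} (r : X → X → Prop) (q : X → Prop) {x₀ : X}
    (h₀ : q x₀) :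
    {s : ℕ → X | s 0 = x₀ ∧ ∀ n, r (s n) (s (n + 1)) ∧ q (s n)} =
      {s | s 0 = x₀ ∧ ∀ n, r (s n) (s (n + 1)) ∧ q (s (n + 1))} := by
  ext s
  refine and_congr_right fun hs0 =>
    ⟨fun h n => ⟨(h n).1, (h (n + 1)).2⟩, fun h n => ⟨(h n).1, ?_⟩⟩
  cases n with
  | zero => exact hs0 ▸ h₀
  | succ n => exact (h n).2
open Function

variable {F K : Type} [Field F] [Field K]

theorem mem_genMaxSet_iff {A : Subring F} {a : A} : (a : F) ∈ genMaxSet F A ↔ ¬IsUnit a := by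
  simp [genMaxSet, isUnit_iff_exists_inv, Subtype.ext_iff]

theorem le_genBlowup (A : Subring F) (x : F) : A ≤ genBlowup F A x :=
  fun _ ha => Subring.subset_closure (Or.inl ha)

theorem div_mem_genBlowup {A : Subring F} {a x : F} (ha : a ∈ genMaxSet F A) (hx : x ≠ 0) :
    a / x ∈ genBlowup F A x :=
  Subring.subset_closure (Or.inr ⟨a, ha, div_mul_cancel₀ a hx⟩)

theorem genBlowup_le {A T : Subring F} {x : F} (hx : x ≠ 0) (hA : A ≤ T)
    (h : ∀ a ∈ genMaxSet F A, a / x ∈ T) : genBlowup F A x ≤ T := by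
  rw [genBlowup, Subring.closure_le]
  rintro y (hy | ⟨a, ha, rfl⟩)
  · exact hA hy
  · simpa [hx] using h _ ha

theorem coe_ne_zero_of_notMem {B : Subring F} {Q : Ideal B} {s : B} (hs : s ∉ Q) :
    (s : F) ≠ 0 :=
  fun h => hs (by rw [show s = 0 from Subtype.ext h]; exact Q.zero_mem)

section Localization

variable (B : Subring F) (Q : Ideal B) [Q.IsPrime]

def localizationAtPrime : Subring F where
  carrier := {y | ∃ b s : B, s ∉ Q ∧ y * s = b}
  one_mem' := ⟨1, 1, Q.primeCompl.one_mem, by simp⟩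
  zero_mem' := ⟨0, 1, Q.primeCompl.one_mem, by simp⟩
  mul_mem' := by
    rintro y y' ⟨b, s, hs, hys⟩ ⟨b', s', hs', hys'⟩
    refine ⟨b * b', s * s', Q.primeCompl.mul_mem hs hs', ?_⟩
    push_cast
    rw [← hys, ← hys']
    ring
  add_mem' := by
    rintro y y' ⟨b, s, hs, hys⟩ ⟨b', s', hs', hys'⟩
    refine ⟨b * s' + b' * s, s * s', Q.primeCompl.mul_mem hs hs', ?_⟩
    push_cast
    rw [← hys, ← hys']
    ring
  neg_mem' := by
    rintro y ⟨b, s, hs, hys⟩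
    exact ⟨-b, s, hs, by push_cast; rw [neg_mul, hys]⟩

variable {B Q}

theorem le_localizationAtPrime : B ≤ localizationAtPrime B Q :=
  fun b hb => ⟨⟨b, hb⟩, 1, Q.primeCompl.one_mem, mul_one b⟩

theorem inv_mem_localizationAtPrime {s : B} (hs : s ∉ Q) :
    (s : F)⁻¹ ∈ localizationAtPrime B Q :=
  ⟨1, s, hs, inv_mul_cancel₀ (coe_ne_zero_of_notMem hs)⟩

theorem localizationAtPrime_le {T : Subring F} (hB : B ≤ T)
    (h : ∀ s : B, s ∉ Q → (s : F)⁻¹ ∈ T) : localizationAtPrime B Q ≤ T := by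
  rintro y ⟨b, s, hs, hys⟩
  rw [← eq_mul_inv_iff_mul_eq₀ (coe_ne_zero_of_notMem hs)] at hys
  exact hys ▸ mul_mem (hB b.2) (h s hs)

theorem mem_genMaxSet_localizationAtPrime {q : B} (hq : q ∈ Q) :
    (q : F) ∈ genMaxSet F (localizationAtPrime B Q) := by
  refine ⟨le_localizationAtPrime q.2, ?_⟩
  rintro ⟨z, ⟨b, s, hs, hzs⟩, hqz⟩
  apply hs
  have : s = q * b := Subtype.ext (by push_cast; rw [← hzs, ← mul_assoc, hqz, one_mul])
  exact this ▸ Q.mul_mem_right b hq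

theorem ne_zero_and_inv_mem_localizationAtPrime {y : F} {b s : B} (hb : b ∉ Q)
    (hys : y * s = b) : y ≠ 0 ∧ y⁻¹ ∈ localizationAtPrime B Q := by
  have hy : y ≠ 0 := by
    rintro rfl
    exact coe_ne_zero_of_notMem hb (by rw [← hys, zero_mul])
  exact ⟨hy, s, b, hb, by rw [← hys, inv_mul_cancel_left₀ hy]⟩

instance isLocalRing_localizationAtPrime : IsLocalRing (localizationAtPrime B Q) := by
  refine .of_isUnit_or_isUnit_one_sub_self fun ⟨y, b, s, hs, hys⟩ => ?_
  simp only [Submonoid.isUnit_iff_and, AddSubgroupClass.coe_sub, OneMemClass.coe_one]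
  by_cases hb : b ∈ Q
  · have hsb : s - b ∉ Q := fun h => hs (by simpa using Q.add_mem h hb)
    refine .inr (ne_zero_and_inv_mem_localizationAtPrime (s := s) hsb ?_)
    push_cast
    rw [sub_mul, hys, one_mul]
  · exact .inl (ne_zero_and_inv_mem_localizationAtPrime hb hys)

end Localization

theorem isGenLQT_iff {A A' : Subring F} :
    IsGenLQT F A A' ↔ ∃ x ∈ genMaxSet F A, x ≠ 0 ∧
      ∃ (Q : Ideal (genBlowup F A x)) (_ : Q.IsPrime),
        (∀ a ∈ genMaxSet F A, ∃ q ∈ Q, (q : F) = a) ∧ A' = localizationAtPrime _ Q := by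
  constructor
  · rintro ⟨x, hx, hx0, Q, hQ, hm, h⟩
    exact ⟨x, hx, hx0, Q, hQ, hm, SetLike.coe_injective h⟩
  · rintro ⟨x, hx, hx0, Q, hQ, hm, rfl⟩
    exact ⟨x, hx, hx0, Q, hQ, hm, rfl⟩

namespace IsGenLQT

variable {A A' : Subring F}

theorem genMaxSet_subset (h : IsGenLQT F A A') : genMaxSet F A ⊆ genMaxSet F A' := by
  obtain ⟨x, -, -, Q, _, hmQ, rfl⟩ := isGenLQT_iff.1 h
  intro a ha
  obtain ⟨q, hq, rfl⟩ := hmQ a ha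
  exact mem_genMaxSet_localizationAtPrime hq

theorem isLocalRing (h : IsGenLQT F A A') : IsLocalRing A' := by
  obtain ⟨x, -, -, Q, _, -, rfl⟩ := isGenLQT_iff.1 h
  infer_instance

end IsGenLQT

section Residue

variable {RP : Subring F} (α : RP →+* K)

-- `R_n / (P R_P ∩ R_n)` in the paper, for `R_n ⊆ R_P`.
def residueImage (A : Subring F) : Subring K :=
  (A.comap RP.subtype).map α

def residueMap {B : Subring F} (hB : B ≤ RP) : B →+* residueImage α B :=
  (α.comp (Subring.inclusion hB)).codRestrict _ fun b => ⟨Subring.inclusion hB b, b.2, rfl⟩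

variable {B : Subring F} (hB : B ≤ RP)

@[simp]
theorem coe_residueMap (b : B) : (residueMap α hB b : K) = α (Subring.inclusion hB b) :=
  rfl

theorem residueMap_surjective : Surjective (residueMap α hB) := by
  rintro ⟨_, ⟨y, hy, rfl⟩⟩
  exact ⟨⟨y, hy⟩, rfl⟩

theorem residueMap_mem_genMaxSet_iff [IsLocalRing B] (b : B) :
    (residueMap α hB b : K) ∈ genMaxSet K (residueImage α B) ↔ (b : F) ∈ genMaxSet F B := by
  have := IsLocalHom.of_surjective _ (residueMap_surjective α hB)
  rw [mem_genMaxSet_iff, mem_genMaxSet_iff, isUnit_map_iff]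

theorem residueImage_closure {S : Set F} (hS : S ⊆ RP) :
    residueImage α (Subring.closure S) = Subring.closure (α '' (RP.subtype ⁻¹' S)) := by
  have : Subring.closure S = (Subring.closure (RP.subtype ⁻¹' S)).map RP.subtype := by
    rw [RingHom.map_closure, Set.image_preimage_eq_of_subset (by simpa using hS)]
  rw [residueImage, this, Subring.comap_map_eq_self_of_injective Subtype.val_injective,
    RingHom.map_closure]

theorem exists_mem_genMaxSet_residue_eq {A : Subring F} [IsLocalRing A] (hA : A ≤ RP) {c : K}
    (hc : c ∈ genMaxSet K (residueImage α A)) :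
    ∃ a : RP, (a : F) ∈ genMaxSet F A ∧ α a = c := by
  obtain ⟨a, ha⟩ := residueMap_surjective α hA ⟨c, hc.1⟩
  obtain rfl : α (Subring.inclusion hA a) = c := congrArg Subtype.val ha
  exact ⟨_, (residueMap_mem_genMaxSet_iff α hA a).1 hc, rfl⟩

theorem residue_ne_zero_of_genBlowup_le {A : Subring F}
    (hw : ∃ w : RP, (w : F) ∈ genMaxSet F A ∧ α w ≠ 0) {x : RP} (hx : (x : F) ≠ 0)
    (hB : genBlowup F A x ≤ RP) : α x ≠ 0 := by
  obtain ⟨w, hw, hw0⟩ := hw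
  have : (⟨w / x, hB (div_mem_genBlowup hw hx)⟩ : RP) * x = w :=
    Subtype.ext (div_mul_cancel₀ _ hx)
  exact right_ne_zero_of_mul (by rwa [← map_mul, this])

theorem inv_mem_of_residueImage_le {T T' : Subring F} [IsLocalRing T'] (hT : T ≤ RP)
    (hT' : T' ≤ RP) (hle : residueImage α T ≤ residueImage α T') {y : F} (hy : y ∈ T')
    (hy' : y⁻¹ ∈ T) : y⁻¹ ∈ T' := by
  rcases eq_or_ne y 0 with rfl | hy0
  · rw [inv_zero]
    exact zero_mem T'
  have := IsLocalHom.of_surjective _ (residueMap_surjective α hT')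
  refine Submonoid.inv_mem_of_isUnit (a := (⟨y, hy⟩ : T'))
    ((isUnit_map_iff (residueMap α hT') _).1 (IsUnit.of_mul_eq_one
      ⟨α ⟨y⁻¹, hT hy'⟩, hle ⟨⟨y⁻¹, hT hy'⟩, hy', rfl⟩⟩ (Subtype.ext ?_)))
  rw [MulMemClass.coe_mul, coe_residueMap, ← map_mul]
  exact (congrArg α (Subtype.ext (mul_inv_cancel₀ hy0))).trans (map_one α)

end Residue

section LocalResidue

variable {RP : Subring F} (α : RP →+* K) (hα : ∀ y : RP, α y ≠ 0 → IsUnit y)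
include hα

theorem inv_mem_of_residue_ne_zero {y : RP} (hy : α y ≠ 0) : (y : F)⁻¹ ∈ RP :=
  Submonoid.inv_mem_of_isUnit (hα y hy)

theorem genBlowup_le_of_residue_ne_zero {A : Subring F} (hA : A ≤ RP) {x : RP}
    (hx : α x ≠ 0) : genBlowup F A x ≤ RP := by
  refine genBlowup_le (fun h => hx ?_) hA fun a ha => ?_
  · rw [show x = 0 from Subtype.ext h, map_zero]
  · exact div_eq_mul_inv a x ▸ mul_mem (hA ha.1) (inv_mem_of_residue_ne_zero α hα hx)

theorem residueImage_genBlowup {A : Subring F} [IsLocalRing A] (hA : A ≤ RP) {x : RP}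
    (hx : α x ≠ 0) :
    residueImage α (genBlowup F A x) = genBlowup K (residueImage α A) (α x) := by
  rw [genBlowup, residueImage_closure α (Subring.closure_le.1
    (genBlowup_le_of_residue_ne_zero α hα hA hx)), genBlowup]
  congr 1
  ext z
  simp only [Set.mem_image, Set.mem_preimage, Set.mem_union, Set.mem_ofPred_eq]
  constructor
  · rintro ⟨y, hy | ⟨a, ha, hyx⟩, rfl⟩
    · exact .inl ⟨y, hy, rfl⟩
    · refine .inr
        ⟨residueMap α hA ⟨a, ha.1⟩, (residueMap_mem_genMaxSet_iff α hA _).2 ha, ?_⟩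
      rw [coe_residueMap, ← map_mul]
      exact congrArg α (Subtype.ext hyx)
  · rintro (⟨y, hy, rfl⟩ | ⟨c, hc, hzc⟩)
    · exact ⟨y, .inl hy, rfl⟩
    · obtain ⟨a, ha, rfl⟩ := exists_mem_genMaxSet_residue_eq α hA hc
      obtain ⟨v, hxv⟩ := (hα x hx).exists_right_inv
      refine ⟨a * v, .inr ⟨a, ha, ?_⟩, ?_⟩
      · exact congrArg Subtype.val
          (show a * v * x = a by rw [mul_assoc, mul_comm v, hxv, mul_one])
      · rw [map_mul, ← hzc, mul_assoc, ← map_mul, hxv, map_one, mul_one]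

theorem exists_residueMap_genBlowup {A : Subring F} [IsLocalRing A] (hA : A ≤ RP) {x : RP}
    (hx : α x ≠ 0) :
    ∃ (hB : genBlowup F A x ≤ RP)
      (ψ : genBlowup F A x →+* genBlowup K (residueImage α A) (α x)),
      Surjective ψ ∧ ∀ b, (ψ b : K) = α (Subring.inclusion hB b) :=
  let e := RingEquiv.subringCongr (residueImage_genBlowup α hα hA hx)
  ⟨genBlowup_le_of_residue_ne_zero α hα hA hx, e.toRingHom.comp (residueMap α _),
    e.surjective.comp (residueMap_surjective α _), fun _ => rfl⟩

theorem residueImage_localizationAtPrime {B : Subring F} (hB : B ≤ RP) {C : Subring K}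
    (ψ : B →+* C) (hψ : Surjective ψ) (hψα : ∀ b, (ψ b : K) = α (Subring.inclusion hB b))
    (Q : Ideal B) [Q.IsPrime] (Q' : Ideal C) [hQ' : Q'.IsPrime] (hQ : Q'.comap ψ = Q) :
    residueImage α (localizationAtPrime B Q) = localizationAtPrime C Q' := by
  subst hQ
  ext z
  constructor
  · rintro ⟨y, ⟨b, s, hs, hys⟩, rfl⟩
    refine ⟨ψ b, ψ s, hs, ?_⟩
    rw [hψα, hψα, ← map_mul]
    exact congrArg α (Subtype.ext hys)
  · rintro ⟨b', s', hs', hz⟩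
    obtain ⟨b, rfl⟩ := hψ b'
    obtain ⟨s, rfl⟩ := hψ s'
    rw [hψα, hψα] at hz
    obtain ⟨v, hsv⟩ := (hα _ (hψα s ▸ coe_ne_zero_of_notMem hs')).exists_right_inv
    refine ⟨Subring.inclusion hB b * v, ⟨b, s, hs', ?_⟩, ?_⟩
    · exact congrArg Subtype.val (show Subring.inclusion hB b * v * Subring.inclusion hB s =
        Subring.inclusion hB b by rw [mul_assoc, mul_comm v, hsv, mul_one])
    · rw [map_mul, ← hz, mul_assoc, ← map_mul, hsv, map_one, mul_one]

theorem IsGenLQT.residue {A A' : Subring F} [IsLocalRing A] (hA : A ≤ RP) (hA' : A' ≤ RP)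
    (hw : ∃ w : RP, (w : F) ∈ genMaxSet F A ∧ α w ≠ 0) (h : IsGenLQT F A A') :
    IsGenLQT K (residueImage α A) (residueImage α A') := by
  obtain ⟨x, hx, hx0, Q, hQ, hmQ, rfl⟩ := isGenLQT_iff.1 h
  lift x to RP using hA hx.1
  have hαx : α x ≠ 0 :=
    residue_ne_zero_of_genBlowup_le α hw hx0 (le_localizationAtPrime.trans hA')
  obtain ⟨hB, ψ, hψ, hψα⟩ := exists_residueMap_genBlowup α hα hA hαx
  have hker : RingHom.ker ψ ≤ Q := by
    intro b hb
    by_contra hbQ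
    have hunit : IsUnit (Subring.inclusion hB b) := Submonoid.isUnit_iff_and.2
      ⟨(coe_ne_zero_of_notMem hbQ : (b : F) ≠ 0), hA' (inv_mem_localizationAtPrime hbQ)⟩
    refine (hunit.map α).ne_zero ?_
    rw [← hψα, RingHom.mem_ker.1 hb]
    rfl
  have hQ' : (Q.map ψ).IsPrime := Ideal.map_isPrime_of_surjective hψ hker
  refine isGenLQT_iff.2 ⟨_, (residueMap_mem_genMaxSet_iff α hA ⟨x, hx.1⟩).2 hx, hαx,
    Q.map ψ, hQ', fun c hc => ?_, ?_⟩
  · obtain ⟨a, ha, rfl⟩ := exists_mem_genMaxSet_residue_eq α hA hc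
    obtain ⟨q, hq, hqa⟩ := hmQ a ha
    exact ⟨ψ q, Ideal.mem_map_of_mem ψ hq, (hψα q).trans (congrArg α (Subtype.ext hqa))⟩
  -- `hQ'` is passed by name: the semiring structure inside `Q.map ψ` is not the one instance
  -- search expects on `Ideal (genBlowup K _ _)`.
  · refine residueImage_localizationAtPrime α hα hB ψ hψ hψα _ _ (hQ' := hQ') ?_
    rw [Ideal.comap_map_of_surjective _ hψ, ← RingHom.ker_eq_comap_bot, sup_eq_left.2 hker]

theorem exists_isGenLQT_residueImage_eq {A : Subring F} [IsLocalRing A] (hA : A ≤ RP)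
    {T : Subring K} (h : IsGenLQT K (residueImage α A) T) :
    ∃ A', IsGenLQT F A A' ∧ A' ≤ RP ∧ residueImage α A' = T := by
  obtain ⟨_, hxb, hxb0, Q', hQ', hmQ', rfl⟩ := isGenLQT_iff.1 h
  obtain ⟨x, hx, rfl⟩ := exists_mem_genMaxSet_residue_eq α hA hxb
  obtain ⟨hB, ψ, hψ, hψα⟩ := exists_residueMap_genBlowup α hα hA hxb0
  have hx0 : (x : F) ≠ 0 := fun h0 => hxb0 (by rw [show x = 0 from Subtype.ext h0, map_zero])
  have hres : ∀ s, s ∉ Q'.comap ψ → α (Subring.inclusion hB s) ≠ 0 :=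
    fun s hs => hψα s ▸ coe_ne_zero_of_notMem hs
  have hmQ : ∀ a ∈ genMaxSet F A, ∃ q ∈ Q'.comap ψ, (q : F) = a := by
    intro a ha
    obtain ⟨q, hq, hqa⟩ := hmQ' _ ((residueMap_mem_genMaxSet_iff α hA ⟨a, ha.1⟩).2 ha)
    refine ⟨⟨a, le_genBlowup A x ha.1⟩, ?_, rfl⟩
    rwa [Ideal.mem_comap, show ψ _ = q from
      Subtype.ext ((hψα ⟨a, le_genBlowup A x ha.1⟩).trans hqa.symm)]
  exact ⟨localizationAtPrime _ (Q'.comap ψ),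
    isGenLQT_iff.2 ⟨x, hx, hx0, _, inferInstance, hmQ, rfl⟩,
    localizationAtPrime_le hB fun s hs => inv_mem_of_residue_ne_zero α hα (hres s hs),
    residueImage_localizationAtPrime α hα hB ψ hψ hψα _ _ rfl⟩

end LocalResidue

theorem IsGenLQT.le_of_residueImage_eq {RP : Subring F} (α : RP →+* K) {A T T' : Subring F}
    (hT : T ≤ RP) (hT' : T' ≤ RP) (h : IsGenLQT F A T) (h' : IsGenLQT F A T')
    (heq : residueImage α T = residueImage α T') : T ≤ T' := by
  obtain ⟨x, hx, hx0, Q, hQ, -, rfl⟩ := isGenLQT_iff.1 h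
  obtain ⟨x', hx', hx'0, Q', hQ', -, rfl⟩ := isGenLQT_iff.1 h'
  have hinv {y : F} (hy : y ∈ localizationAtPrime _ Q')
      (hy' : y⁻¹ ∈ localizationAtPrime _ Q) :=
    inv_mem_of_residueImage_le α hT hT' heq.le hy hy'
  have hB' : genBlowup F A x' ≤ localizationAtPrime _ Q' := le_localizationAtPrime
  have hdiv : x' / x ∈ localizationAtPrime _ Q' := by
    simpa using hinv (hB' (div_mem_genBlowup hx hx'0))
      (le_localizationAtPrime (by simpa using div_mem_genBlowup hx' hx0))
  have hB : genBlowup F A x ≤ localizationAtPrime _ Q' :=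
    genBlowup_le hx0 ((le_genBlowup A x').trans hB') fun a ha =>
      (div_mul_div_cancel₀ hx'0 : a / x' * (x' / x) = a / x) ▸
        mul_mem (hB' (div_mem_genBlowup ha hx'0)) hdiv
  exact localizationAtPrime_le hB fun s hs =>
    hinv (hB s.2) (inv_mem_localizationAtPrime hs)

theorem IsGenLQT.eq_of_residueImage_eq {RP : Subring F} (α : RP →+* K) {A T T' : Subring F}
    (hT : T ≤ RP) (hT' : T' ≤ RP) (h : IsGenLQT F A T) (h' : IsGenLQT F A T')
    (heq : residueImage α T = residueImage α T') : T = T' :=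
  le_antisymm (h.le_of_residueImage_eq α hT hT' h' heq)
    (h'.le_of_residueImage_eq α hT' hT h heq.symm)

theorem exists_residue_ne_zero_of_ne_maximalIdeal {R RP : Subring F} [IsLocalRing R]
    {P : Ideal R} [P.IsPrime] (hP : P ≠ IsLocalRing.maximalIdeal R) (hR : R ≤ RP)
    (α : RP →+* K)
    (hker : ∀ y, α y = 0 → ∃ p s : R, p ∈ P ∧ s ∉ P ∧ (y : F) * s = p) :
    ∃ w : RP, (w : F) ∈ genMaxSet F R ∧ α w ≠ 0 := by
  obtain ⟨r, hrm, hrP⟩ :=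
    SetLike.exists_of_lt ((IsLocalRing.le_maximalIdeal Ideal.IsPrime.ne_top').lt_of_ne hP)
  refine ⟨⟨r, hR r.2⟩, mem_genMaxSet_iff.2 hrm, fun h0 => ?_⟩
  obtain ⟨p, s, hp, hs, hrs⟩ := hker _ h0
  rw [show p = r * s from Subtype.ext hrs.symm] at hp
  exact (Ideal.IsPrime.mem_or_mem ‹_› hp).elim hrP hs

theorem lqt_sequences_along_prime_correspondence_general
    (F : Type) [Field F] (R : Subring F)
    [IsLocalRing R]
    (P : Ideal R) (hPp : P.IsPrime)
    (hPnm : P ≠ IsLocalRing.maximalIdeal R)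
    (RP : Subring F)
    (hRP : (RP : Set F) = {y : F | ∃ a s : R, s ∉ P ∧ y * (s : F) = (a : F)})
    (K : Type) [Field K] (α : RP →+* K)
    (hker : ∀ y : RP, α y = 0 ↔
      ∃ p s : R, p ∈ P ∧ s ∉ P ∧ (y : F) * (s : F) = (p : F)) :
    Set.BijOn (fun (seq : ℕ → Subring F) =>
        (fun n => Subring.map α (Subring.comap RP.subtype (seq n)) : ℕ → Subring K))
      {seq | seq 0 = R ∧ ∀ n, IsGenLQT F (seq n) (seq (n + 1)) ∧ seq n ≤ RP}
      {t | t 0 = Subring.map α (Subring.comap RP.subtype R) ∧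
        ∀ n, IsGenLQT K (t n) (t (n + 1))} := by
  have hRP' : RP = localizationAtPrime R P := SetLike.coe_injective hRP
  have hR : R ≤ RP := hRP' ▸ le_localizationAtPrime
  have hα : ∀ y, α y ≠ 0 → IsUnit y := fun y hy => by
    obtain ⟨a, s, hs, hys⟩ : (y : F) ∈ localizationAtPrime R P := hRP' ▸ y.2
    obtain ⟨hy0, hy'⟩ := ne_zero_and_inv_mem_localizationAtPrime
      (fun ha => hy ((hker y).2 ⟨a, s, ha, hs, hys⟩)) hys
    exact Submonoid.isUnit_iff_and.2 ⟨hy0, hRP' ▸ hy'⟩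
  rw [setOf_seq_and_pred_succ _ (· ≤ RP) hR]
  refine bijOn_seq_of_step (residueImage α) (fun A A' => IsGenLQT F A A' ∧ A' ≤ RP)
    (IsGenLQT K)
    (fun A => A ≤ RP ∧ IsLocalRing A ∧ ∃ w : RP, (w : F) ∈ genMaxSet F A ∧ α w ≠ 0)
    ⟨hR, inferInstance,
      exists_residue_ne_zero_of_ne_maximalIdeal hPnm hR α fun y => (hker y).1⟩
    ?_ ?_ ?_ ?_
  · rintro A A' ⟨-, -, w, hw, hw0⟩ ⟨h, hA'⟩
    exact ⟨hA', h.isLocalRing, w, h.genMaxSet_subset hw, hw0⟩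
  · rintro A A' ⟨hA, _, hw⟩ ⟨h, hA'⟩
    exact h.residue α hα hA hA' hw
  · rintro A T T' - ⟨h, hT⟩ ⟨h', hT'⟩
    exact h.eq_of_residueImage_eq α hT hT' h'
  · rintro A T ⟨hA, _, -⟩ h
    obtain ⟨A', h', hA', rfl⟩ := exists_isGenLQT_residueImage_eq α hα hA h
    exact ⟨A', ⟨h', hA'⟩, rfl⟩

/-- Let `R` be a Noetherian local domain with quotient field `F` and `P` a nonzero
nonmaximal prime of `R`.  Let `R_P` be the localization at `P` and `α : R_P → κ(P)` the
residue map onto the residue field `κ(P)`.  Then taking images under `α` (that is,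
`R_n ↦ R_n/(PR_P ∩ R_n)`) is a one-to-one correspondence between infinite sequences of
local quadratic transforms of `R₀ = R` along `R_P` and infinite sequences of local
quadratic transforms of `R/P`. -/
theorem lqt_sequences_along_prime_correspondence
    (F : Type) [Field F] (R : Subring F)
    [IsNoetherianRing R] [IsLocalRing R]
    (hfrac : ∀ y : F, ∃ a b : R, b ≠ 0 ∧ y * (b : F) = (a : F))
    (P : Ideal R) (hPp : P.IsPrime) (hPne : P ≠ ⊥)
    (hPnm : P ≠ IsLocalRing.maximalIdeal R)
    (RP : Subring F)
    (hRP : (RP : Set F) = {y : F | ∃ a s : R, s ∉ P ∧ y * (s : F) = (a : F)})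
    (K : Type) [Field K] (α : RP →+* K) (hαsurj : Function.Surjective α)
    (hker : ∀ y : RP, α y = 0 ↔
      ∃ p s : R, p ∈ P ∧ s ∉ P ∧ (y : F) * (s : F) = (p : F)) :
    Set.BijOn (fun (seq : ℕ → Subring F) =>
        (fun n => Subring.map α (Subring.comap RP.subtype (seq n)) : ℕ → Subring K))
      {seq | seq 0 = R ∧ ∀ n, IsGenLQT F (seq n) (seq (n + 1)) ∧ seq n ≤ RP}
      {t | t 0 = Subring.map α (Subring.comap RP.subtype R) ∧
        ∀ n, IsGenLQT K (t n) (t (n + 1))} :=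
  lqt_sequences_along_prime_correspondence_general F R P hPp hPnm RP hRP K α hker
end

section
/- Let S be a local domain, Q a nonzero prime ideal of S with QS_Q = Q such that S/Q is a valuation ring with quotient field S_Q/Q. If R is a regular local subring of S with S_Q = R_{Q∩R}, and x_0,…,x_n are nonzero elements of S such that the images of x_k/x_i in S/Q (for a fixed i with x_i generating among them) generate a principal fractional ideal generated by the image of x_j/x_i with x_j/x_i ∉ Q, then (x_0/x_i, …, x_n/x_i)S = (x_j/x_i)S. -/
/-! Since `x_j/x_i ∉ Q`, comparability gives `Q ⊆ (x_j/x_i)S`. Each relation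
`x_k/x_i = s·(x_j/x_i) + q` with `q ∈ Q` then shows `x_k/x_i ∈ (x_j/x_i)S`, and a family
all of whose members are multiples of one of them generates the same `S`-module as that one. -/

open Finset

theorem setOf_linear_combinations_eq_of_forall_eq_mul {R : Type*} [CommRing R] (S : Subring R)
    {ι : Type*} [Fintype ι] (a : ι → R) (j : ι) (hdvd : ∀ k, ∃ d : S, a k = a j * d) :
    {y : R | ∃ c : ι → S, y = ∑ k, (c k : R) * a k} = {y : R | ∃ s : S, y = a j * s} := by
  classical
  choose d hd using hdvd
  ext y
  constructor
  · rintro ⟨c, rfl⟩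
    refine ⟨∑ k, c k * d k, ?_⟩
    push_cast
    rw [mul_sum]
    exact sum_congr rfl fun k _ => by rw [hd k]; ring
  · rintro ⟨s, rfl⟩
    refine ⟨Pi.single j s, ?_⟩
    rw [sum_eq_single j (fun k _ hk => by simp [hk]) (by simp)]
    simp [mul_comm]

theorem exists_eq_mul_of_eq_mul_add {R : Type*} [CommRing R] (S : Subring R) {a g q : R}
    {s : S} (h : a = s * g + q) (hq : ∃ t : S, q = g * t) : ∃ d : S, a = g * d := by
  obtain ⟨t, rfl⟩ := hq
  exact ⟨s + t, by rw [h]; push_cast; ring⟩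

theorem principal_generation_lifts_from_quotient_general
    (F : Type) [Field F] (S : Subring F)
    (Q : Ideal S)
    (hcomp : ∀ y ∈ {y : F | ∃ a s : S, s ∉ Q ∧ y * (s : F) = (a : F)},
      y ∉ {z : F | ∃ q' : S, q' ∈ Q ∧ (q' : F) = z} →
        {z : F | ∃ q' : S, q' ∈ Q ∧ (q' : F) = z} ⊆ {z : F | ∃ s : S, z = y * (s : F)})
    (n : ℕ) (x : Fin (n + 1) → F)
    (i j : Fin (n + 1))
    (hmem : ∀ k, x k / x i ∈ {y : F | ∃ a s : S, s ∉ Q ∧ y * (s : F) = (a : F)})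
    (hj : x j / x i ∉ {z : F | ∃ q' : S, q' ∈ Q ∧ (q' : F) = z})
    (hgen : ∀ k, ∃ s : S, ∃ q ∈ {z : F | ∃ q' : S, q' ∈ Q ∧ (q' : F) = z},
      x k / x i = (s : F) * (x j / x i) + q) :
    {y : F | ∃ c : Fin (n + 1) → S, y = ∑ k, (c k : F) * (x k / x i)} =
      {y : F | ∃ s : S, y = (x j / x i) * (s : F)} := by
  have hQ_le := hcomp _ (hmem j) hj
  refine setOf_linear_combinations_eq_of_forall_eq_mul S (fun k => x k / x i) j fun k => ?_
  obtain ⟨s, q, hq, hk⟩ := hgen k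
  exact exists_eq_mul_of_eq_mul_add S hk (hQ_le hq)

/-- Let `S` be a local domain with quotient field `F`, `Q` a nonzero prime of `S` with
`QS_Q = Q` such that `S/Q` is a valuation ring (with quotient field `S_Q/Q`), and
suppose every fractional `S`-ideal contained in `S_Q` is comparable to `Q` (expressed by:
if `y ∈ S_Q \ Q` then `Q ⊆ yS`).  If `x₀, …, xₙ` are nonzero elements of `S` and the
images of the `x_k/x_i` in `S/Q` generate the principal fractional ideal generated by the
image of `x_j/x_i`, where `x_j/x_i ∉ Q`, then `(x₀/x_i, …, xₙ/x_i)S = (x_j/x_i)S`. -/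
theorem principal_generation_lifts_from_quotient
    (F : Type) [Field F] (S : Subring F) [IsLocalRing S]
    (hfrac : ∀ y : F, ∃ a b : S, b ≠ 0 ∧ y * (b : F) = (a : F))
    (Q : Ideal S) (hQp : Q.IsPrime) (hQne : Q ≠ ⊥)
    [ValuationRing (S ⧸ Q)]
    (hQSQ : ∀ y ∈ {y : F | ∃ a s : S, s ∉ Q ∧ y * (s : F) = (a : F)},
      ∀ q ∈ {z : F | ∃ q' : S, q' ∈ Q ∧ (q' : F) = z},
        y * q ∈ {z : F | ∃ q' : S, q' ∈ Q ∧ (q' : F) = z})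
    (hcomp : ∀ y ∈ {y : F | ∃ a s : S, s ∉ Q ∧ y * (s : F) = (a : F)},
      y ∉ {z : F | ∃ q' : S, q' ∈ Q ∧ (q' : F) = z} →
        {z : F | ∃ q' : S, q' ∈ Q ∧ (q' : F) = z} ⊆ {z : F | ∃ s : S, z = y * (s : F)})
    (n : ℕ) (x : Fin (n + 1) → F) (hx0 : ∀ k, x k ≠ 0) (hxS : ∀ k, x k ∈ S)
    (i j : Fin (n + 1))
    (hmem : ∀ k, x k / x i ∈ {y : F | ∃ a s : S, s ∉ Q ∧ y * (s : F) = (a : F)})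
    (hj : x j / x i ∉ {z : F | ∃ q' : S, q' ∈ Q ∧ (q' : F) = z})
    (hgen : ∀ k, ∃ s : S, ∃ q ∈ {z : F | ∃ q' : S, q' ∈ Q ∧ (q' : F) = z},
      x k / x i = (s : F) * (x j / x i) + q) :
    {y : F | ∃ c : Fin (n + 1) → S, y = ∑ k, (c k : F) * (x k / x i)} =
      {y : F | ∃ s : S, y = (x j / x i) * (s : F)} :=
  principal_generation_lifts_from_quotient_general F S Q hcomp n x i j hmem hj hgen
end

section
/- Let S be a local domain with maximal ideal m_S = xS principal, and let P be a prime ideal of S with P = P S_P (P is an ideal of S_P) and such that every fractional S-ideal contained in S_P is comparable to P. If S/P is a DVR whose maximal ideal is generated by the image of x, then P ⊆ xS and in fact P ⊊ xS = m_S; consequently every nonmaximal prime of S is contained in P. -/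
/-!
A nonmaximal prime `L` of `S` misses `x`, so from `L ⊆ xS` primality gives `L = x L`, hence
`L ⊆ xⁿ S` for every `n`. Modulo `P` this places the image of `L` in `⋂ (x̄)ⁿ`, which is zero by
Krull's intersection theorem in the noetherian domain `S/P`; thus `L ⊆ P`. Since `S/P` is not a
field, `x̄ ≠ 0`, so `x ∉ P` and `P ⊊ xS`.
-/

namespace Ideal

variable {R : Type*} [CommRing R]

theorem IsPrime.le_span_singleton_mul {L : Ideal R} [L.IsPrime] {x : R} (hx : x ∉ L)
    (hL : L ≤ span {x}) : L ≤ span {x} * L := by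
  intro a ha
  obtain ⟨c, rfl⟩ := mem_span_singleton'.mp (hL ha)
  have hc : c ∈ L := (‹L.IsPrime›.mem_or_mem ha).resolve_right hx
  rw [mul_comm c x]
  exact mul_mem_mul (mem_span_singleton_self x) hc

theorem IsPrime.le_span_singleton_pow {L : Ideal R} [L.IsPrime] {x : R} (hx : x ∉ L)
    (hL : L ≤ span {x}) (n : ℕ) : L ≤ span {x} ^ n := by
  have hmul : L ≤ span {x} ^ n * L := by
    induction n with
    | zero => simp
    | succ n ih =>
      calc L ≤ span {x} * L := IsPrime.le_span_singleton_mul hx hL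
        _ ≤ span {x} * (span {x} ^ n * L) := mul_mono_right ih
        _ = span {x} ^ (n + 1) * L := by rw [pow_succ', mul_assoc]
  exact hmul.trans mul_le_left

theorem le_of_forall_le_pow_of_map_ne_top {P I L : Ideal R} [IsNoetherianRing (R ⧸ P)]
    [IsDomain (R ⧸ P)] (hI : I.map (Quotient.mk P) ≠ ⊤) (hL : ∀ n : ℕ, L ≤ I ^ n) : L ≤ P := by
  have hmap : L.map (Quotient.mk P) ≤ ⨅ n : ℕ, I.map (Quotient.mk P) ^ n :=
    le_iInf fun n => (map_mono (hL n)).trans_eq (Ideal.map_pow _ I n)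
  rwa [iInf_pow_eq_bot_of_isDomain _ hI, le_bot_iff, map_eq_bot_iff_le_ker, mk_ker] at hmap

end Ideal

theorem IsDiscreteValuationRing.ne_zero_of_span_singleton_isMaximal {A : Type*} [CommRing A]
    [IsDomain A] [IsDiscreteValuationRing A] {a : A} (ha : (Ideal.span {a}).IsMaximal) :
    a ≠ 0 := by
  rintro rfl
  exact not_a_field A (by rw [← IsLocalRing.eq_maximalIdeal ha, Ideal.span_singleton_eq_bot])

theorem nonmaximal_primes_below_of_quotient_dvr_general
    (S : Type) [CommRing S] [IsLocalRing S]
    (x : S) (hmax : IsLocalRing.maximalIdeal S = Ideal.span {x})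
    (P : Ideal S) [hPp : P.IsPrime]
    (hDVR : IsDiscreteValuationRing (S ⧸ P))
    (hquotmax : (Ideal.span {Ideal.Quotient.mk P x}).IsMaximal) :
    P < Ideal.span {x} ∧
      ∀ L : Ideal S, L.IsPrime → L ≠ IsLocalRing.maximalIdeal S → L ≤ P := by
  have hxP : x ∉ P := fun hx =>
    IsDiscreteValuationRing.ne_zero_of_span_singleton_isMaximal hquotmax
      (Ideal.Quotient.eq_zero_iff_mem.mpr hx)
  refine ⟨lt_of_le_not_ge (hmax ▸ IsLocalRing.le_maximalIdeal hPp.ne_top)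
    fun h => hxP (Ideal.span_singleton_le_iff_mem P |>.mp h), fun L hL hLmax => ?_⟩
  have hLx : L ≤ Ideal.span {x} := hmax ▸ IsLocalRing.le_maximalIdeal hL.ne_top
  have hxL : x ∉ L := fun hx => hLmax <| le_antisymm (IsLocalRing.le_maximalIdeal hL.ne_top)
    (hmax ▸ (Ideal.span_singleton_le_iff_mem L).mpr hx)
  refine Ideal.le_of_forall_le_pow_of_map_ne_top (I := Ideal.span {x}) ?_
    (hL.le_span_singleton_pow hxL hLx)
  rw [Ideal.map_span, Set.image_singleton]
  exact hquotmax.ne_top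

/-- Let `S` be a local domain with principal maximal ideal `m_S = xS`, and let `P` be a
prime of `S` with `P = P S_P` and such that every fractional `S`-ideal contained in `S_P`
is comparable to `P`.  If `S/P` is a DVR whose maximal ideal is generated by the image of
`x`, then `P ⊊ xS = m_S`; consequently every nonmaximal prime of `S` is contained in
`P`. -/
theorem nonmaximal_primes_below_of_quotient_dvr
    (S : Type) [CommRing S] [IsDomain S] [IsLocalRing S]
    (x : S) (hmax : IsLocalRing.maximalIdeal S = Ideal.span {x})
    (P : Ideal S) [hPp : P.IsPrime]
    (hPloc : ∀ y ∈ Ideal.map (algebraMap S (Localization.AtPrime P)) P,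
      ∃ p ∈ P, y = algebraMap S (Localization.AtPrime P) p)
    (hcomp : ∀ J : Submodule S (Localization.AtPrime P),
      (∃ d : S, d ≠ 0 ∧ ∀ y ∈ J, ∃ s : S,
        algebraMap S (Localization.AtPrime P) d * y
          = algebraMap S (Localization.AtPrime P) s) →
      (J ≤ Submodule.map (Algebra.linearMap S (Localization.AtPrime P)) P ∨
        Submodule.map (Algebra.linearMap S (Localization.AtPrime P)) P ≤ J))
    (hDVR : IsDiscreteValuationRing (S ⧸ P))
    (hquotmax : (Ideal.span {Ideal.Quotient.mk P x}).IsMaximal) :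
    P < Ideal.span {x} ∧
      ∀ L : Ideal S, L.IsPrime → L ≠ IsLocalRing.maximalIdeal S → L ≤ P :=
  nonmaximal_primes_below_of_quotient_dvr_general S x hmax P (hPp := hPp) hDVR hquotmax
end
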